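/- arXiv:2402.17046 — 3 statements merged into one kernel-verified Lean document; each statement's English description precedes it below -/
import Mathlib

section
/- Let B be a diagram of infinite odometers equipped with an order ω. For every i ≥ 1: the set X̂_{B̄_i} contains a maximal infinite path if and only if the odometer B̄_i is finite-right, and in that case it contains exactly one maximal infinite path; likewise, X̂_{B̄_i} contains a minimal infinite path if and only if B̄_i is finite-left, and in that case it contains exactly one minimal infinite path. For the remaining odometers, X̂_{B̄_i} ∩ X_max = ∅ (respectively X̂_{B̄_i} ∩ X_min = ∅). -/
open MeasureTheory
open scoped ENNReal

/-- Edges of a generalized Bratteli diagram at level `n` are encoded as triples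
`(w, v, j)`: source `w ∈ V_n`, range `v ∈ V_{n+1}`, index `j < f n v w`. -/
abbrev GBDEdge : Type := ℕ × ℕ × ℕ

namespace GBDEdge

/-- The source vertex of an edge. -/
def src (e : GBDEdge) : ℕ := e.1

/-- The range vertex of an edge. -/
def rng (e : GBDEdge) : ℕ := e.2.1

/-- The index of an edge among the parallel edges with the same source and range. -/
def idx (e : GBDEdge) : ℕ := e.2.2

end GBDEdge

/-- A generalized Bratteli diagram, encoded by its incidence matrices:
`f n v w` is the number of edges from the vertex `w ∈ V_n` to the vertex `v ∈ V_{n+1}`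
(all levels are identified with `ℕ`).  Every vertex of level `n+1` has at least one
incoming edge, every vertex has at least one outgoing edge, and every vertex has
finitely many incoming edges. -/
structure GBD where
  f : ℕ → ℕ → ℕ → ℕ
  in_pos : ∀ n v, ∃ w, 0 < f n v w
  out_pos : ∀ n w, ∃ v, 0 < f n v w
  in_fin : ∀ n v, (Function.support fun w => f n v w).Finite

namespace GBD

/-- `e` is an edge of the diagram `B` at level `n`. -/
def IsEdge (B : GBD) (n : ℕ) (e : GBDEdge) : Prop := e.idx < B.f n e.rng e.src

/-- The path space `X_B` of all infinite paths starting at level `0`. -/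
def PathSpace (B : GBD) : Type :=
  {x : ℕ → GBDEdge // (∀ n, B.IsEdge n (x n)) ∧ ∀ n, (x n).rng = (x (n + 1)).src}

instance (B : GBD) : TopologicalSpace B.PathSpace :=
  inferInstanceAs (TopologicalSpace {x : ℕ → GBDEdge //
    (∀ n, B.IsEdge n (x n)) ∧ ∀ n, (x n).rng = (x (n + 1)).src})

instance (B : GBD) : MeasurableSpace B.PathSpace :=
  inferInstanceAs (MeasurableSpace {x : ℕ → GBDEdge //
    (∀ n, B.IsEdge n (x n)) ∧ ∀ n, (x n).rng = (x (n + 1)).src})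

/-- The cylinder set of all paths whose first `m` edges are `es 0, …, es (m-1)` and whose
`m`-th edge has source `w`; for a finite path `es` of length `m` ending at `w ∈ V_m` this
is the cylinder set `[es]` (for `m = 0` this is the set of paths starting at `w ∈ V_0`). -/
def cyl (B : GBD) (m : ℕ) (es : ℕ → GBDEdge) (w : ℕ) : Set B.PathSpace :=
  {x | (∀ n, n < m → x.val n = es n) ∧ (x.val m).src = w}

/-- `es` (more precisely, its first `m` entries) is a finite path of length `m`
ending at the vertex `w ∈ V_m`. -/
def IsFinPathTo (B : GBD) (m : ℕ) (es : ℕ → GBDEdge) (w : ℕ) : Prop :=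
  (∀ n, n < m → B.IsEdge n (es n)) ∧
  (∀ n, n + 1 < m → (es n).rng = (es (n + 1)).src) ∧
  (∀ k, m = k + 1 → (es k).rng = w)

/-- A measure on the path space is tail invariant if any two cylinder sets determined by
finite paths with the same terminal vertex have equal measure. -/
def TailInvariant (B : GBD) (μ : Measure B.PathSpace) : Prop :=
  ∀ m es es' w, B.IsFinPathTo m es w → B.IsFinPathTo m es' w →
    μ (B.cyl m es w) = μ (B.cyl m es' w)

/-- Two paths are tail equivalent if they agree from some index on. -/
def TailEquiv (B : GBD) (x y : B.PathSpace) : Prop :=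
  ∃ N, ∀ n, N ≤ n → x.val n = y.val n

/-- A set is tail invariant if it is a union of tail-equivalence classes. -/
def TailInvSet (B : GBD) (S : Set B.PathSpace) : Prop :=
  ∀ x y, B.TailEquiv x y → x ∈ S → y ∈ S

/-- A probability tail-invariant measure is ergodic if every tail-invariant Borel set is
null or conull. -/
def IsErgodicTI (B : GBD) (μ : Measure B.PathSpace) : Prop :=
  IsProbabilityMeasure μ ∧ B.TailInvariant μ ∧
    ∀ S, MeasurableSet S → B.TailInvSet S → μ S = 0 ∨ μ S = 1

end GBD

/-- The diagram of infinite odometers (DIO) determined by the numbers `a n i ≥ 2`: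
there are `a n i` vertical edges from the vertex `i ∈ V_n` to the vertex `i ∈ V_{n+1}`,
and a single edge from the vertex `i+1 ∈ V_n` to the vertex `i ∈ V_{n+1}`.
Vertices are indexed by `ℕ` starting from `0`, so vertex `i` here corresponds to
vertex `i + 1` in the paper. -/
def DIO (a : ℕ → ℕ → ℕ) (ha : ∀ n i, 2 ≤ a n i) : GBD where
  f := fun n v w => if w = v then a n v else if w = v + 1 then 1 else 0
  in_pos := fun n v => ⟨v, by
    simp only [if_pos rfl]
    exact lt_of_lt_of_le (by norm_num) (ha n v)⟩
  out_pos := fun n w => ⟨w, by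
    simp only [if_pos rfl]
    exact lt_of_lt_of_le (by norm_num) (ha n w)⟩
  in_fin := fun n v => by
    apply Set.Finite.subset ((Set.finite_singleton (v + 1)).insert v)
    intro w hw
    rcases eq_or_ne w v with h | h
    · exact Set.mem_insert_iff.mpr (Or.inl h)
    · rcases eq_or_ne w (v + 1) with h' | h'
      · exact Set.mem_insert_iff.mpr (Or.inr h')
      · exact absurd (by simp [h, h']) hw

/-- The path space `X_{B̄_i}` of the vertical odometer subdiagram `B̄_i` through
the vertex `i`: all paths using only vertical edges at the vertex `i`. -/
def XBar (a : ℕ → ℕ → ℕ) (ha : ∀ n i, 2 ≤ a n i) (i : ℕ) : Set (DIO a ha).PathSpace :=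
  {x | ∀ n, (x.val n).src = i ∧ (x.val n).rng = i}

/-- The saturation `X̂_{B̄_i}`: all paths tail equivalent to a path of `X_{B̄_i}`. -/
def XHat (a : ℕ → ℕ → ℕ) (ha : ∀ n i, 2 ≤ a n i) (i : ℕ) : Set (DIO a ha).PathSpace :=
  {x | ∃ y ∈ XBar a ha i, (DIO a ha).TailEquiv x y}

/-- `μ` is the canonical extension `μ̂_i` of the unique tail-invariant probability
measure `μ̄_i` of the vertical odometer `B̄_i`: it is tail invariant, vanishes outside
`X̂_{B̄_i}`, and its restriction to `X_{B̄_i}` equals `μ̄_i`, i.e. every cylinder of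
`X_{B̄_i}` of length `n` has measure `1/(a 0 i ⋯ a (n-1) i)`. -/
def IsCanonicalExt (a : ℕ → ℕ → ℕ) (ha : ∀ n i, 2 ≤ a n i) (i : ℕ)
    (μ : Measure (DIO a ha).PathSpace) : Prop :=
  (DIO a ha).TailInvariant μ ∧ μ ((XHat a ha i)ᶜ) = 0 ∧
  ∀ n (es : ℕ → GBDEdge),
    (∀ m, m < n → (es m).src = i ∧ (es m).rng = i ∧ (es m).idx < a m i) →
    μ ((DIO a ha).cyl n es i ∩ XBar a ha i)
      = (∏ j ∈ Finset.range n, (a j i : ℝ≥0∞))⁻¹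

/-- An order `ω` on the DIO diagram assigns to every edge a rank; `ω n i e` is the rank of
the edge `e` among the `a n i + 1` edges with range `i ∈ V_{n+1}`.  `ω` is an order iff
for every `n, i` it maps the set of edges with range `i` bijectively onto `{0, …, a n i}`. -/
def IsOrder (a : ℕ → ℕ → ℕ) (ha : ∀ n i, 2 ≤ a n i) (ω : ℕ → ℕ → GBDEdge → ℕ) : Prop :=
  ∀ n i, Set.BijOn (ω n i) {e : GBDEdge | (DIO a ha).IsEdge n e ∧ e.rng = i}
    (Set.Iio (a n i + 1))

/-- The edge `e` is maximal in `r⁻¹(r(e))`, i.e. it has the top rank `a n (rng e)`. -/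
def IsMaxEdge (a : ℕ → ℕ → ℕ) (ω : ℕ → ℕ → GBDEdge → ℕ) (n : ℕ) (e : GBDEdge) : Prop :=
  ω n e.rng e = a n e.rng

/-- The edge `e` is minimal in `r⁻¹(r(e))`, i.e. it has rank `0`. -/
def IsMinEdge (ω : ℕ → ℕ → GBDEdge → ℕ) (n : ℕ) (e : GBDEdge) : Prop :=
  ω n e.rng e = 0

/-- The set `X_max` of maximal infinite paths. -/
def MaxPaths (a : ℕ → ℕ → ℕ) (ha : ∀ n i, 2 ≤ a n i) (ω : ℕ → ℕ → GBDEdge → ℕ) :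
    Set (DIO a ha).PathSpace :=
  {x | ∀ n, IsMaxEdge a ω n (x.val n)}

/-- The set `X_min` of minimal infinite paths. -/
def MinPaths (a : ℕ → ℕ → ℕ) (ha : ∀ n i, 2 ≤ a n i) (ω : ℕ → ℕ → GBDEdge → ℕ) :
    Set (DIO a ha).PathSpace :=
  {x | ∀ n, IsMinEdge ω n (x.val n)}

/-- The order at the vertex `i ∈ V_{n+1}` is right: the single edge `(i+1, i, 0)`
from `i+1 ∈ V_n` is the maximal incoming edge. -/
def RightAt (a : ℕ → ℕ → ℕ) (ω : ℕ → ℕ → GBDEdge → ℕ) (n i : ℕ) : Prop :=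
  ω n i (i + 1, i, 0) = a n i

/-- The order at the vertex `i ∈ V_{n+1}` is left: the single edge `(i+1, i, 0)`
from `i+1 ∈ V_n` is the minimal incoming edge. -/
def LeftAt (ω : ℕ → ℕ → GBDEdge → ℕ) (n i : ℕ) : Prop :=
  ω n i (i + 1, i, 0) = 0

/-- The odometer `B̄_i` is finite-right: from some level on, the order at `i` is not right. -/
def FiniteRight (a : ℕ → ℕ → ℕ) (ω : ℕ → ℕ → GBDEdge → ℕ) (i : ℕ) : Prop :=
  ∃ N, ∀ n, N ≤ n → ¬ RightAt a ω n i

/-- The odometer `B̄_i` is finite-left: from some level on, the order at `i` is not left. -/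
def FiniteLeft (ω : ℕ → ℕ → GBDEdge → ℕ) (i : ℕ) : Prop :=
  ∃ N, ∀ n, N ≤ n → ¬ LeftAt ω n i

/-- `y = φ_ω x` for the Vershik map `φ_ω` associated with the order `ω`:
if `m` is the smallest index such that `x_m` is not maximal, then `y` agrees with `x`
above level `m+1`, `y_m` is the successor of `x_m` among the edges with range `r(x_m)`,
and `(y_0, …, y_{m-1})` is the minimal finite path ending at the source of `y_m`. -/
def VershikRel (a : ℕ → ℕ → ℕ) (ha : ∀ n i, 2 ≤ a n i) (ω : ℕ → ℕ → GBDEdge → ℕ)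
    (x y : (DIO a ha).PathSpace) : Prop :=
  ∃ m, (∀ n, n < m → IsMaxEdge a ω n (x.val n)) ∧
    ¬ IsMaxEdge a ω m (x.val m) ∧
    (y.val m).rng = (x.val m).rng ∧
    ω m (x.val m).rng (y.val m) = ω m (x.val m).rng (x.val m) + 1 ∧
    (∀ n, n < m → IsMinEdge ω n (y.val n)) ∧
    ∀ n, m < n → y.val n = x.val n

/-- The order `ω` is quasi-stationary: for every vertex number `i`, either the order at `i`
is left on all levels, or right on all levels, or middle on all levels. -/
def QuasiStationary (a : ℕ → ℕ → ℕ) (ω : ℕ → ℕ → GBDEdge → ℕ) : Prop :=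
  ∀ i, (∀ n, LeftAt ω n i) ∨ (∀ n, RightAt a ω n i) ∨
    (∀ n, ¬ LeftAt ω n i ∧ ¬ RightAt a ω n i)

section Aux

variable (a : ℕ → ℕ → ℕ) (ha : ∀ n i, 2 ≤ a n i) (ω : ℕ → ℕ → GBDEdge → ℕ)

lemma edge_mem_iff (n i : ℕ) (e : GBDEdge) :
    ((DIO a ha).IsEdge n e ∧ e.rng = i) ↔
      ((e.1 = i ∧ e.2.1 = i ∧ e.2.2 < a n i) ∨ e = (i + 1, i, 0)) := by
  obtain ⟨w, v, j⟩ := e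
  simp only [GBD.IsEdge, DIO, GBDEdge.src, GBDEdge.rng, GBDEdge.idx, Prod.mk.injEq]
  constructor
  · rintro ⟨hj, rfl⟩
    by_cases hw : w = v
    · subst hw; rw [if_pos rfl] at hj; exact Or.inl ⟨rfl, rfl, hj⟩
    · rw [if_neg hw] at hj
      by_cases hw' : w = v + 1
      · subst hw'; rw [if_pos rfl] at hj
        interval_cases j
        exact Or.inr ⟨rfl, rfl, rfl⟩
      · rw [if_neg hw'] at hj; omega
  · rintro (⟨rfl, rfl, hj⟩ | ⟨rfl, rfl, rfl⟩)
    · exact ⟨by rw [if_pos rfl]; exact hj, rfl⟩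
    · refine ⟨?_, rfl⟩
      rw [if_neg (by omega), if_pos rfl]
      omega

lemma exists_unique_rank (hω : IsOrder a ha ω) (n i r : ℕ) (hr : r ≤ a n i) :
    ∃! e : GBDEdge, ((DIO a ha).IsEdge n e ∧ e.rng = i) ∧ ω n i e = r := by
  obtain ⟨e, he, hre⟩ := (hω n i).surjOn (Set.mem_Iio.mpr (Nat.lt_succ_of_le hr))
  exact ⟨e, ⟨he, hre⟩, fun e' he' => (hω n i).injOn he'.1 he (he'.2.trans hre.symm)⟩

variable (hω : IsOrder a ha ω) (t : ℕ → ℕ → ℕ) (ht : ∀ n v, t n v ≤ a n v)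

/-- The unique edge with range `v` at level `n` of rank `t n v`. -/
noncomputable def sE (n v : ℕ) : GBDEdge :=
  (exists_unique_rank a ha ω hω n v (t n v) (ht n v)).exists.choose

lemma sE_spec (n v : ℕ) :
    ((DIO a ha).IsEdge n (sE a ha ω hω t ht n v) ∧ (sE a ha ω hω t ht n v).rng = v) ∧
      ω n v (sE a ha ω hω t ht n v) = t n v :=
  (exists_unique_rank a ha ω hω n v (t n v) (ht n v)).exists.choose_spec

lemma sE_src (n v : ℕ) (h : ω n v (v + 1, v, 0) ≠ t n v) :
    (sE a ha ω hω t ht n v).src = v := by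
  have hs := sE_spec a ha ω hω t ht n v
  rcases (edge_mem_iff a ha n v _).mp hs.1 with ⟨h1, _, _⟩ | heq
  · exact h1
  · exact absurd (heq ▸ hs.2) h

/-- Vertex sequence of the special path, going downward from vertex `i` at level `N`. -/
noncomputable def W (i N : ℕ) : ℕ → ℕ
  | 0 => i
  | k + 1 => (sE a ha ω hω t ht (N - k - 1) (W i N k)).src

lemma gen (hω : IsOrder a ha ω) (ht : ∀ n v, t n v ≤ a n v) (i : ℕ) :
    ((∃ x : (DIO a ha).PathSpace, x ∈ XHat a ha i ∧
        ∀ n, ω n (x.val n).rng (x.val n) = t n (x.val n).rng) ↔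
      ∃ N, ∀ n, N ≤ n → ω n i (i + 1, i, 0) ≠ t n i) ∧
    ((∃ N, ∀ n, N ≤ n → ω n i (i + 1, i, 0) ≠ t n i) →
      ∃! x : (DIO a ha).PathSpace, x ∈ XHat a ha i ∧
        ∀ n, ω n (x.val n).rng (x.val n) = t n (x.val n).rng) := by
  -- uniqueness
  have hun : ∀ x y : (DIO a ha).PathSpace,
      (x ∈ XHat a ha i ∧ ∀ n, ω n (x.val n).rng (x.val n) = t n (x.val n).rng) →
      (y ∈ XHat a ha i ∧ ∀ n, ω n (y.val n).rng (y.val n) = t n (y.val n).rng) →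
      x = y := by
    rintro x y ⟨⟨yx, hyx, N1, hN1⟩, hSx⟩ ⟨⟨yy, hyy, N2, hN2⟩, hSy⟩
    set M := max N1 N2 with hM
    have key1 : ∀ n, M ≤ n → x.val n = y.val n := by
      intro n hn
      have hrx : (x.val n).rng = i := by
        rw [hN1 n (le_trans (le_max_left _ _) hn)]; exact (hyx n).2
      have hry : (y.val n).rng = i := by
        rw [hN2 n (le_trans (le_max_right _ _) hn)]; exact (hyy n).2
      refine (hω n i).injOn ⟨x.2.1 n, hrx⟩ ⟨y.2.1 n, hry⟩ ?_
      have h1 := hSx n; rw [hrx] at h1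
      have h2 := hSy n; rw [hry] at h2
      rw [h1, h2]
    have step : ∀ n, x.val (n + 1) = y.val (n + 1) → x.val n = y.val n := by
      intro n h
      have hr : (y.val n).rng = (x.val n).rng := by rw [x.2.2 n, y.2.2 n, h]
      refine (hω n (x.val n).rng).injOn ⟨x.2.1 n, rfl⟩ ⟨y.2.1 n, hr⟩ ?_
      have h2 := hSy n; rw [hr] at h2
      rw [hSx n, h2]
    have hall : ∀ n, x.val n = y.val n := by
      intro n
      rcases le_or_gt M n with h | h
      · exact key1 n h
      · have hd : ∀ d, x.val (M - d) = y.val (M - d) := by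
          intro d
          induction d with
          | zero => exact key1 M le_rfl
          | succ d ih =>
            by_cases hz : M - d = 0
            · have h0 : M - (d + 1) = 0 := by omega
              rw [h0]; rw [hz] at ih; exact ih
            · have hs : M - (d + 1) + 1 = M - d := by omega
              apply step; rw [hs]; exact ih
        have := hd (M - n)
        rwa [Nat.sub_sub_self h.le] at this
    exact Subtype.ext (funext hall)
  -- forward direction
  have hfwd : (∃ x : (DIO a ha).PathSpace, x ∈ XHat a ha i ∧
      ∀ n, ω n (x.val n).rng (x.val n) = t n (x.val n).rng) →
      ∃ N, ∀ n, N ≤ n → ω n i (i + 1, i, 0) ≠ t n i := by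
    rintro ⟨x, ⟨y, hy, N, hN⟩, hS⟩
    refine ⟨N, fun n hn heq => ?_⟩
    have hxy := hN n hn
    have hrng : (x.val n).rng = i := by rw [hxy]; exact (hy n).2
    have hx_rank : ω n i (x.val n) = t n i := by
      have h := hS n; rw [hrng] at h; exact h
    have hspec := (edge_mem_iff a ha n i ((i + 1, i, 0) : GBDEdge)).mpr (Or.inr rfl)
    have hcon : x.val n = ((i + 1, i, 0) : GBDEdge) :=
      (hω n i).injOn ⟨x.2.1 n, hrng⟩ hspec (by rw [hx_rank, heq])
    have hsrc : (x.val n).src = i := by rw [hxy]; exact (hy n).1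
    rw [hcon] at hsrc
    exact absurd hsrc (by simp [GBDEdge.src])
  -- existence
  have hex : (∃ N, ∀ n, N ≤ n → ω n i (i + 1, i, 0) ≠ t n i) →
      ∃ x : (DIO a ha).PathSpace, x ∈ XHat a ha i ∧
        ∀ n, ω n (x.val n).rng (x.val n) = t n (x.val n).rng := by
    rintro ⟨N, hF⟩
    set w := W a ha ω hω t ht i N with hw
    have hw0 : w 0 = i := rfl
    have hwsucc : ∀ k, w (k + 1) = (sE a ha ω hω t ht (N - k - 1) (w k)).src :=
      fun k => rfl
    set X : ℕ → GBDEdge := fun n => sE a ha ω hω t ht n (w (N - (n + 1))) with hX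
    have hXedge : ∀ n, (DIO a ha).IsEdge n (X n) :=
      fun n => (sE_spec a ha ω hω t ht n _).1.1
    have hXrng : ∀ n, (X n).rng = w (N - (n + 1)) :=
      fun n => (sE_spec a ha ω hω t ht n _).1.2
    have hXrank : ∀ n, ω n (w (N - (n + 1))) (X n) = t n (w (N - (n + 1))) :=
      fun n => (sE_spec a ha ω hω t ht n _).2
    have hXsrc_hi : ∀ n, N ≤ n → (X n).src = i := by
      intro n hn
      have h0 : N - (n + 1) = 0 := by omega
      have : X n = sE a ha ω hω t ht n i := by rw [hX]; simp only [h0]; rfl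
      rw [this]
      exact sE_src a ha ω hω t ht n i (hF n hn)
    have hconn : ∀ n, (X n).rng = (X (n + 1)).src := by
      intro n
      rcases le_or_gt N (n + 1) with h | h
      · have h0 : N - (n + 1) = 0 := by omega
        rw [hXrng n, h0, hXsrc_hi (n + 1) h, hw0]
      · -- n + 1 < N
        have hk : N - (n + 2) + 1 = N - (n + 1) := by omega
        have hl : N - (N - (n + 2)) - 1 = n + 1 := by omega
        have hsrc : (X (n + 1)).src = w (N - (n + 2) + 1) := by
          rw [hwsucc (N - (n + 2)), hl]
        rw [hsrc, hk, hXrng n]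
    set x : (DIO a ha).PathSpace := ⟨X, hXedge, hconn⟩ with hxdef
    have hXvert : ∀ n, N ≤ n → (X n).src = i ∧ (X n).rng = i := by
      intro n hn
      refine ⟨hXsrc_hi n hn, ?_⟩
      have h0 : N - (n + 1) = 0 := by omega
      rw [hXrng n, h0, hw0]
    set Y : ℕ → GBDEdge := fun n => if n < N then ((i, i, 0) : GBDEdge) else X n with hY
    have hYvert : ∀ n, (Y n).src = i ∧ (Y n).rng = i := by
      intro n
      rw [hY]
      by_cases h : n < N
      · simp only [if_pos h]; exact ⟨rfl, rfl⟩
      · simp only [if_neg h]; exact hXvert n (by omega)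
    have hYedge : ∀ n, (DIO a ha).IsEdge n (Y n) := by
      intro n
      rw [hY]
      by_cases h : n < N
      · simp only [if_pos h]
        exact ((edge_mem_iff a ha n i _).mpr (Or.inl ⟨rfl, rfl, by
          show 0 < a n i; have := ha n i; omega⟩)).1
      · simp only [if_neg h]; exact hXedge n
    have hYconn : ∀ n, (Y n).rng = (Y (n + 1)).src := by
      intro n
      rw [(hYvert n).2, (hYvert (n + 1)).1]
    have hy : (⟨Y, hYedge, hYconn⟩ : (DIO a ha).PathSpace) ∈ XBar a ha i :=
      fun n => hYvert n
    refine ⟨x, ⟨⟨Y, hYedge, hYconn⟩, hy, N, fun n hn => ?_⟩, fun n => ?_⟩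
    · show X n = Y n
      rw [hY]; simp only [if_neg (by omega : ¬ n < N)]
    · show ω n (X n).rng (X n) = t n (X n).rng
      rw [hXrng n]
      exact hXrank n
  exact ⟨⟨hfwd, fun hF => hex hF⟩,
    fun hF => (hex hF).imp fun x hx => ⟨hx, fun y hy => hun y x hy hx⟩⟩

end Aux

/-- For an ordered DIO diagram: `X̂_{B̄_i}` contains a maximal
(resp. minimal) infinite path iff the odometer `B̄_i` is finite-right
(resp. finite-left), and in that case it contains exactly one such path; for the
remaining odometers `X̂_{B̄_i} ∩ X_max = ∅` (resp. `X̂_{B̄_i} ∩ X_min = ∅`). -/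
theorem stmt16 (a : ℕ → ℕ → ℕ) (ha : ∀ n i, 2 ≤ a n i)
    (ω : ℕ → ℕ → GBDEdge → ℕ) (hω : IsOrder a ha ω) (i : ℕ) :
    ((∃ x, x ∈ XHat a ha i ∧ x ∈ MaxPaths a ha ω) ↔ FiniteRight a ω i) ∧
    (FiniteRight a ω i →
      ∃! x : (DIO a ha).PathSpace, x ∈ XHat a ha i ∧ x ∈ MaxPaths a ha ω) ∧
    (¬ FiniteRight a ω i → XHat a ha i ∩ MaxPaths a ha ω = ∅) ∧
    ((∃ x, x ∈ XHat a ha i ∧ x ∈ MinPaths a ha ω) ↔ FiniteLeft ω i) ∧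
    (FiniteLeft ω i →
      ∃! x : (DIO a ha).PathSpace, x ∈ XHat a ha i ∧ x ∈ MinPaths a ha ω) ∧
    (¬ FiniteLeft ω i → XHat a ha i ∩ MinPaths a ha ω = ∅) := by
  obtain ⟨h1, h2⟩ := gen a ha ω (fun n v => a n v) hω (fun n v => le_refl _) i
  obtain ⟨h3, h4⟩ := gen a ha ω (fun _ _ => 0) hω (fun n v => Nat.zero_le _) i
  refine ⟨h1, h2, ?_, h3, h4, ?_⟩
  · intro h
    exact Set.eq_empty_iff_forall_notMem.mpr fun x hx => h (h1.mp ⟨x, hx.1, hx.2⟩)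
  · intro h
    exact Set.eq_empty_iff_forall_notMem.mpr fun x hx => h (h3.mp ⟨x, hx.1, hx.2⟩)
end

section
/- Let B be a diagram of infinite odometers equipped with an order ω such that no odometer B̄_i is finite-right and no odometer B̄_i is finite-left (i.e. I_fr = I_fl = ∅). Then X_max = X_min = ∅ and the Vershik map φ_ω is a homeomorphism of the path space X_B onto itself. -/
open MeasureTheory
open scoped ENNReal

namespace Stmt18Aux

variable (a : ℕ → ℕ → ℕ) (ha : ∀ n i, 2 ≤ a n i) (ω : ℕ → ℕ → GBDEdge → ℕ)

def ESet (n i : ℕ) : Set GBDEdge := {e | (DIO a ha).IsEdge n e ∧ e.rng = i}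

lemma mem_ESet {n i : ℕ} {e : GBDEdge} :
    e ∈ ESet a ha n i ↔ ((e.src = i ∧ e.rng = i ∧ e.idx < a n i) ∨ e = (i+1, i, 0)) := by
  obtain ⟨w, v, j⟩ := e
  simp only [ESet, GBD.IsEdge, DIO, GBDEdge.rng, GBDEdge.src, GBDEdge.idx, Set.mem_setOf_eq,
    Prod.mk.injEq]
  constructor
  · rintro ⟨h1, rfl⟩
    split_ifs at h1 with h h'
    · exact Or.inl ⟨h, rfl, h1⟩
    · exact Or.inr ⟨h', rfl, by omega⟩
    · omega
  · rintro (⟨rfl, rfl, hj⟩ | ⟨rfl, rfl, rfl⟩)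
    · exact ⟨by rw [if_pos rfl]; exact hj, rfl⟩
    · exact ⟨by rw [if_neg (by omega), if_pos rfl]; omega, rfl⟩

lemma rng_of_mem {n i : ℕ} {e : GBDEdge} (h : e ∈ ESet a ha n i) : e.rng = i := h.2

lemma isEdge_of_mem {n i : ℕ} {e : GBDEdge} (h : e ∈ ESet a ha n i) :
    (DIO a ha).IsEdge n e := h.1

lemma slant_mem (n i : ℕ) : ((i+1, i, 0) : GBDEdge) ∈ ESet a ha n i :=
  (mem_ESet a ha).mpr (Or.inr rfl)

lemma rank_lt (hω : IsOrder a ha ω) {n i : ℕ} {e : GBDEdge} (he : e ∈ ESet a ha n i) : ω n i e < a n i + 1 :=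
  (hω n i).mapsTo he

noncomputable def edgeOf (n i k : ℕ) : GBDEdge := Function.invFunOn (ω n i) (ESet a ha n i) k

lemma edgeOf_mem (hω : IsOrder a ha ω) {n i k : ℕ} (hk : k < a n i + 1) :
    edgeOf a ha ω n i k ∈ ESet a ha n i ∧ ω n i (edgeOf a ha ω n i k) = k := by
  obtain ⟨e, he, hek⟩ := (hω n i).surjOn (Set.mem_Iio.mpr hk)
  exact ⟨Function.invFunOn_mem ⟨e, he, hek⟩, Function.invFunOn_eq ⟨e, he, hek⟩⟩

lemma edgeOf_eq (hω : IsOrder a ha ω) {n i : ℕ} {e : GBDEdge} (he : e ∈ ESet a ha n i) :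
    edgeOf a ha ω n i (ω n i e) = e := by
  obtain ⟨hm, hv⟩ := edgeOf_mem a ha ω hω (rank_lt a ha ω hω he)
  exact (hω n i).injOn hm he hv

end Stmt18Aux
namespace Stmt18Aux

variable (a : ℕ → ℕ → ℕ) (ha : ∀ n i, 2 ≤ a n i) (ω : ℕ → ℕ → GBDEdge → ℕ)

noncomputable def extEdge (s : ℕ → ℕ → ℕ) (n i : ℕ) : GBDEdge :=
  edgeOf a ha ω n i (s n i)

noncomputable def chainVert (s : ℕ → ℕ → ℕ) (m v : ℕ) : ℕ → ℕ
  | 0 => v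
  | k+1 => (extEdge a ha ω s (m - 1 - k) (chainVert s m v k)).src

noncomputable def chainEdge (s : ℕ → ℕ → ℕ) (m v n : ℕ) : GBDEdge :=
  extEdge a ha ω s n (chainVert a ha ω s m v (m - (n+1)))

variable (hω : IsOrder a ha ω)

lemma extEdge_spec (hω : IsOrder a ha ω) {s : ℕ → ℕ → ℕ} (hs : ∀ n i, s n i < a n i + 1)
    (n i : ℕ) : extEdge a ha ω s n i ∈ ESet a ha n i ∧ ω n i (extEdge a ha ω s n i) = s n i :=
  edgeOf_mem a ha ω hω (hs n i)

lemma chainEdge_rng (hω : IsOrder a ha ω) {s : ℕ → ℕ → ℕ} (hs : ∀ n i, s n i < a n i + 1)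
    (m v n : ℕ) :
    (chainEdge a ha ω s m v n).rng = chainVert a ha ω s m v (m - (n+1)) :=
  (extEdge_spec a ha ω hω hs n _).1.2

lemma chainEdge_isEdge (hω : IsOrder a ha ω) {s : ℕ → ℕ → ℕ} (hs : ∀ n i, s n i < a n i + 1)
    (m v n : ℕ) : (DIO a ha).IsEdge n (chainEdge a ha ω s m v n) :=
  (extEdge_spec a ha ω hω hs n _).1.1

lemma chainEdge_rank (hω : IsOrder a ha ω) {s : ℕ → ℕ → ℕ} (hs : ∀ n i, s n i < a n i + 1)
    (m v n : ℕ) :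
    ω n (chainEdge a ha ω s m v n).rng (chainEdge a ha ω s m v n)
      = s n (chainEdge a ha ω s m v n).rng := by
  rw [chainEdge_rng a ha ω hω hs]
  exact (extEdge_spec a ha ω hω hs n _).2

lemma chainEdge_src {s : ℕ → ℕ → ℕ} (m v n : ℕ) (h : n + 1 ≤ m) :
    (chainEdge a ha ω s m v n).src = chainVert a ha ω s m v (m - n) := by
  have h1 : m - n = (m - (n+1)) + 1 := by omega
  have h2 : m - 1 - (m - (n+1)) = n := by omega
  rw [h1, chainVert, h2]
  rfl

lemma chainEdge_last_rng (hω : IsOrder a ha ω) {s : ℕ → ℕ → ℕ}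
    (hs : ∀ n i, s n i < a n i + 1) (m v : ℕ) (h : 0 < m) :
    (chainEdge a ha ω s m v (m-1)).rng = v := by
  rw [chainEdge_rng a ha ω hω hs]
  have : m - (m - 1 + 1) = 0 := by omega
  rw [this]
  rfl

lemma chain_uniq (hω : IsOrder a ha ω) {s : ℕ → ℕ → ℕ} (hs : ∀ n i, s n i < a n i + 1)
    (m v : ℕ) (e : ℕ → GBDEdge)
    (he : ∀ n, n < m → (DIO a ha).IsEdge n (e n))
    (hc : ∀ n, n + 1 < m → (e n).rng = (e (n+1)).src)
    (hlast : 0 < m → (e (m-1)).rng = v)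
    (hrank : ∀ n, n < m → ω n (e n).rng (e n) = s n (e n).rng) :
    ∀ n, n < m → e n = chainEdge a ha ω s m v n := by
  have key : ∀ k, k < m → (e (m-1-k)).rng = chainVert a ha ω s m v k ∧
      e (m-1-k) = chainEdge a ha ω s m v (m-1-k) := by
    intro k
    induction k with
    | zero =>
      intro hk
      have hrng : (e (m-1)).rng = v := hlast hk
      have hmem : e (m-1) ∈ ESet a ha (m-1) v := ⟨he _ (by omega), hrng⟩
      have : edgeOf a ha ω (m-1) v (ω (m-1) v (e (m-1))) = e (m-1) :=
        edgeOf_eq a ha ω hω hmem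
      have hr : ω (m-1) v (e (m-1)) = s (m-1) v := by
        have := hrank (m-1) (by omega); rwa [hrng] at this
      rw [hr] at this
      refine ⟨hrng, ?_⟩
      rw [chainEdge]
      simp only [Nat.sub_zero]
      have h0 : m - (m - 1 + 1) = 0 := by omega
      rw [h0]
      exact this.symm
    | succ k ih =>
      intro hk
      obtain ⟨ihr, ihe⟩ := ih (by omega)
      have hsrc : (e (m-1-(k+1))).rng = chainVert a ha ω s m v (k+1) := by
        have hc' := hc (m-1-(k+1)) (by omega)
        have hn : m-1-(k+1)+1 = m-1-k := by omega
        rw [hn] at hc'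
        rw [hc', ihe, chainEdge_src a ha ω _ _ _ (by omega)]
        have : m - (m-1-k) = k + 1 := by omega
        rw [this]
      have hmem : e (m-1-(k+1)) ∈ ESet a ha (m-1-(k+1)) (chainVert a ha ω s m v (k+1)) :=
        ⟨he _ (by omega), hsrc⟩
      have heq : edgeOf a ha ω (m-1-(k+1)) _ (ω (m-1-(k+1)) _ (e (m-1-(k+1)))) = e (m-1-(k+1)) :=
        edgeOf_eq a ha ω hω hmem
      have hr : ω (m-1-(k+1)) (chainVert a ha ω s m v (k+1)) (e (m-1-(k+1)))
          = s (m-1-(k+1)) (chainVert a ha ω s m v (k+1)) := by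
        have := hrank (m-1-(k+1)) (by omega); rwa [hsrc] at this
      rw [hr] at heq
      refine ⟨hsrc, ?_⟩
      rw [chainEdge]
      have h0 : m - (m-1-(k+1)+1) = k+1 := by omega
      rw [h0]
      exact heq.symm
  intro n hn
  have h1 : n = m-1-(m-1-n) := by omega
  rw [h1]
  exact (key (m-1-n) (by omega)).2

end Stmt18Aux
namespace Stmt18Aux

variable (a : ℕ → ℕ → ℕ) (ha : ∀ n i, 2 ≤ a n i) (ω : ℕ → ℕ → GBDEdge → ℕ)

lemma exists_ne_rank (hω : IsOrder a ha ω) (t : ℕ → ℕ → ℕ)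
    (hsl : ∀ i N, ∃ n, N ≤ n ∧ ω n i (i+1, i, 0) = t n i)
    (x : (DIO a ha).PathSpace) :
    ∃ m, ω m (x.val m).rng (x.val m) ≠ t m (x.val m).rng := by
  classical
  by_contra hcon
  push_neg at hcon
  set r : ℕ → ℕ := fun n => (x.val n).rng with hr
  have hmem : ∀ n, x.val n ∈ ESet a ha n (r n) := fun n => ⟨x.property.1 n, rfl⟩
  have hstep : ∀ n, r (n+1) ≤ r n := by
    intro n
    have h1 := x.property.2 n
    rcases (mem_ESet a ha).mp (hmem (n+1)) with ⟨hs, _, _⟩ | he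
    · have : r n = r (n+1) := by rw [hr]; dsimp only; rw [h1, hs]
      omega
    · have : (x.val (n+1)).src = r (n+1) + 1 := by rw [he]; rfl
      have h2 : r n = r (n+1) + 1 := by rw [hr]; dsimp only; rw [h1, this]
      omega
  have hant : Antitone r := antitone_nat_of_succ_le hstep
  have hex2 : ∃ k, ∃ n, r n = k := ⟨r 0, 0, rfl⟩
  obtain ⟨N, hN⟩ := Nat.find_spec hex2
  have hmin : ∀ n, Nat.find hex2 ≤ r n := fun n => Nat.find_min' hex2 ⟨n, rfl⟩
  set i := Nat.find hex2 with hi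
  have hconst : ∀ n, N ≤ n → r n = i := fun n hn =>
    le_antisymm (hN ▸ hant hn) (hmin n)
  obtain ⟨n, hn, hslant⟩ := hsl i (N+1)
  have h1 : r n = i := hconst n (by omega)
  have h2 : r (n-1) = i := hconst _ (by omega)
  have hsrc : (x.val n).src = i := by
    have h3 := x.property.2 (n-1)
    have hn1 : n - 1 + 1 = n := by omega
    rw [hn1] at h3
    rw [← h3]
    exact h2
  have hxmem : x.val n ∈ ESet a ha n i := by rw [← h1]; exact hmem n
  have hxr : ω n i (x.val n) = t n i := by
    have := hcon n
    rw [show (x.val n).rng = i from h1] at this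
    exact this
  have : x.val n = (i+1, i, 0) :=
    (hω n i).injOn hxmem (slant_mem a ha n i) (hxr.trans hslant.symm)
  have : (x.val n).src = i + 1 := by rw [this]; rfl
  omega

end Stmt18Aux
namespace Stmt18Aux

section Vmap

variable {a : ℕ → ℕ → ℕ} {ha : ∀ n i, 2 ≤ a n i} {ω : ℕ → ℕ → GBDEdge → ℕ}

open Classical in
noncomputable def firstIdx (t : ℕ → ℕ → ℕ)
    (hex : ∀ x : (DIO a ha).PathSpace, ∃ m, ω m (x.val m).rng (x.val m) ≠ t m (x.val m).rng)
    (x : (DIO a ha).PathSpace) : ℕ := Nat.find (hex x)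

noncomputable def newEdge (t : ℕ → ℕ → ℕ) (step : ℕ → ℕ → ℕ → ℕ)
    (hex : ∀ x : (DIO a ha).PathSpace, ∃ m, ω m (x.val m).rng (x.val m) ≠ t m (x.val m).rng)
    (x : (DIO a ha).PathSpace) : GBDEdge :=
  edgeOf a ha ω (firstIdx t hex x) (x.val (firstIdx t hex x)).rng
    (step (firstIdx t hex x) (x.val (firstIdx t hex x)).rng
      (ω (firstIdx t hex x) (x.val (firstIdx t hex x)).rng (x.val (firstIdx t hex x))))

noncomputable def Vfun (t s : ℕ → ℕ → ℕ) (step : ℕ → ℕ → ℕ → ℕ)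
    (hex : ∀ x : (DIO a ha).PathSpace, ∃ m, ω m (x.val m).rng (x.val m) ≠ t m (x.val m).rng)
    (x : (DIO a ha).PathSpace) (n : ℕ) : GBDEdge :=
  if n < firstIdx t hex x then chainEdge a ha ω s (firstIdx t hex x) (newEdge t step hex x).src n
  else if n = firstIdx t hex x then newEdge t step hex x
  else x.val n

variable (hω : IsOrder a ha ω) (t s : ℕ → ℕ → ℕ) (step : ℕ → ℕ → ℕ → ℕ)
  (hs : ∀ n i, s n i < a n i + 1)
  (hstep : ∀ n i k, k < a n i + 1 → k ≠ t n i → step n i k < a n i + 1 ∧ step n i k ≠ s n i)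
  (hex : ∀ x : (DIO a ha).PathSpace, ∃ m, ω m (x.val m).rng (x.val m) ≠ t m (x.val m).rng)

include hω hs hstep

open Classical in
omit hω hs hstep in
lemma firstIdx_spec (x : (DIO a ha).PathSpace) :
    ω (firstIdx t hex x) (x.val (firstIdx t hex x)).rng (x.val (firstIdx t hex x))
      ≠ t (firstIdx t hex x) (x.val (firstIdx t hex x)).rng := Nat.find_spec (hex x)

open Classical in
omit hω hs hstep in
lemma firstIdx_min {x : (DIO a ha).PathSpace} {n : ℕ} (hn : n < firstIdx t hex x) :
    ω n (x.val n).rng (x.val n) = t n (x.val n).rng :=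
  not_ne_iff.mp (Nat.find_min (hex x) hn)

omit hs in
lemma newEdge_spec (x : (DIO a ha).PathSpace) :
    newEdge t step hex x ∈ ESet a ha (firstIdx t hex x) (x.val (firstIdx t hex x)).rng ∧
    ω (firstIdx t hex x) (x.val (firstIdx t hex x)).rng (newEdge t step hex x)
      = step (firstIdx t hex x) (x.val (firstIdx t hex x)).rng
          (ω (firstIdx t hex x) (x.val (firstIdx t hex x)).rng (x.val (firstIdx t hex x))) := by
  apply edgeOf_mem a ha ω hω
  refine (hstep _ _ _ ?_ (firstIdx_spec t hex x)).1
  exact rank_lt a ha ω hω ⟨x.property.1 _, rfl⟩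

lemma Vfun_isPath (x : (DIO a ha).PathSpace) :
    (∀ n, (DIO a ha).IsEdge n (Vfun t s step hex x n)) ∧
    ∀ n, (Vfun t s step hex x n).rng = (Vfun t s step hex x (n+1)).src := by
  set m := firstIdx t hex x with hm
  have hnew := newEdge_spec hω t s step hstep hex x
  constructor
  · intro n
    rcases lt_trichotomy n m with h | h | h
    · rw [Vfun, if_pos h]
      exact chainEdge_isEdge a ha ω hω hs _ _ _
    · rw [Vfun, if_neg (by omega), if_pos h, h]
      exact hnew.1.1
    · rw [Vfun, if_neg (by omega), if_neg (by omega)]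
      exact x.property.1 n
  · intro n
    rcases lt_trichotomy (n+1) m with h | h | h
    · rw [Vfun, if_pos (by omega), Vfun, if_pos h]
      rw [chainEdge_rng a ha ω hω hs, chainEdge_src a ha ω _ _ _ (by omega)]
    · rw [Vfun, if_pos (by omega), Vfun, if_neg (by omega), if_pos h]
      rw [chainEdge_rng a ha ω hω hs]
      have h0 : m - (n+1) = 0 := by omega
      rw [h0]
      rfl
    · rcases eq_or_lt_of_le (Nat.le_of_lt_succ h) with h2 | h2
      · rw [Vfun, if_neg (by omega), if_pos h2.symm, Vfun, if_neg (by omega), if_neg (by omega)]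
        rw [hnew.1.2, ← hm, h2]
        exact x.property.2 n
      · rw [Vfun, if_neg (by omega), if_neg (by omega), Vfun, if_neg (by omega),
          if_neg (by omega)]
        exact x.property.2 n

noncomputable def Vmap (x : (DIO a ha).PathSpace) : (DIO a ha).PathSpace :=
  ⟨Vfun t s step hex x, Vfun_isPath hω t s step hs hstep hex x⟩

lemma Vmap_val_lt {x : (DIO a ha).PathSpace} {n : ℕ} (h : n < firstIdx t hex x) :
    (Vmap hω t s step hs hstep hex x).val n
      = chainEdge a ha ω s (firstIdx t hex x) (newEdge t step hex x).src n := by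
  show Vfun t s step hex x n = _
  rw [Vfun, if_pos h]

lemma Vmap_val_eq (x : (DIO a ha).PathSpace) :
    (Vmap hω t s step hs hstep hex x).val (firstIdx t hex x) = newEdge t step hex x := by
  show Vfun t s step hex x _ = _
  rw [Vfun, if_neg (by omega), if_pos rfl]

lemma Vmap_val_gt {x : (DIO a ha).PathSpace} {n : ℕ} (h : firstIdx t hex x < n) :
    (Vmap hω t s step hs hstep hex x).val n = x.val n := by
  show Vfun t s step hex x n = _
  rw [Vfun, if_neg (by omega), if_neg (by omega)]

end Vmap

end Stmt18Aux
namespace Stmt18Aux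

section Inv

variable {a : ℕ → ℕ → ℕ} {ha : ∀ n i, 2 ≤ a n i} {ω : ℕ → ℕ → GBDEdge → ℕ}
variable (hω : IsOrder a ha ω) (t s : ℕ → ℕ → ℕ) (step : ℕ → ℕ → ℕ → ℕ)
  (hs : ∀ n i, s n i < a n i + 1)
  (hstep : ∀ n i k, k < a n i + 1 → k ≠ t n i → step n i k < a n i + 1 ∧ step n i k ≠ s n i)
  (hex : ∀ x : (DIO a ha).PathSpace, ∃ m, ω m (x.val m).rng (x.val m) ≠ t m (x.val m).rng)

open Classical in
lemma firstIdx_Vmap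
    (hex' : ∀ x : (DIO a ha).PathSpace, ∃ m, ω m (x.val m).rng (x.val m) ≠ s m (x.val m).rng)
    (x : (DIO a ha).PathSpace) :
    firstIdx s hex' (Vmap hω t s step hs hstep hex x) = firstIdx t hex x := by
  have hnew := newEdge_spec hω t s step hstep hex x
  rw [firstIdx, Nat.find_eq_iff]
  constructor
  · rw [Vmap_val_eq, hnew.1.2, hnew.2]
    exact (hstep _ _ _ (rank_lt a ha ω hω ⟨x.property.1 _, rfl⟩) (firstIdx_spec t hex x)).2
  · intro n hn
    rw [not_ne_iff, Vmap_val_lt hω t s step hs hstep hex hn]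
    exact chainEdge_rank a ha ω hω hs _ _ _

lemma Vmap_Vmap (ht : ∀ n i, t n i < a n i + 1) (step' : ℕ → ℕ → ℕ → ℕ)
    (hstep' : ∀ n i k, k < a n i + 1 → k ≠ s n i → step' n i k < a n i + 1 ∧ step' n i k ≠ t n i)
    (hinv : ∀ n i k, k < a n i + 1 → k ≠ t n i → step' n i (step n i k) = k)
    (hex' : ∀ x : (DIO a ha).PathSpace, ∃ m, ω m (x.val m).rng (x.val m) ≠ s m (x.val m).rng)
    (x : (DIO a ha).PathSpace) :
    Vmap hω s t step' ht hstep' hex' (Vmap hω t s step hs hstep hex x) = x := by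
  have hfi := firstIdx_Vmap hω t s step hs hstep hex hex' x
  have hnew := newEdge_spec hω t s step hstep hex x
  have hxm : x.val (firstIdx t hex x) ∈ ESet a ha (firstIdx t hex x)
      (x.val (firstIdx t hex x)).rng := ⟨x.property.1 _, rfl⟩
  have hrlt := rank_lt a ha ω hω hxm
  have hyv : (Vmap hω t s step hs hstep hex x).val (firstIdx t hex x)
      = newEdge t step hex x := Vmap_val_eq hω t s step hs hstep hex x
  have hnew' : newEdge s step' hex' (Vmap hω t s step hs hstep hex x)
      = x.val (firstIdx t hex x) := by
    rw [newEdge]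
    simp only [hfi, hyv, hnew.1.2, hnew.2]
    rw [hinv _ _ _ hrlt (firstIdx_spec t hex x)]
    exact edgeOf_eq a ha ω hω hxm
  apply Subtype.ext
  funext n
  rcases lt_trichotomy n (firstIdx t hex x) with h | h | h
  · have hlt : (Vmap hω s t step' ht hstep' hex'
        (Vmap hω t s step hs hstep hex x)).val n
        = chainEdge a ha ω t (firstIdx s hex' (Vmap hω t s step hs hstep hex x))
            (newEdge s step' hex' (Vmap hω t s step hs hstep hex x)).src n :=
      Vmap_val_lt hω s t step' ht hstep' hex' (by rw [hfi]; exact h)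
    rw [hfi, hnew'] at hlt
    show _ = x.val n
    rw [hlt]
    symm
    refine chain_uniq a ha ω hω ht (firstIdx t hex x) (x.val (firstIdx t hex x)).src
      (fun k => x.val k) (fun k _ => x.property.1 k) (fun k _ => x.property.2 k) ?_
      (fun k hk => firstIdx_min t hex hk) n h
    intro hpos
    have h1 : firstIdx t hex x - 1 + 1 = firstIdx t hex x := by omega
    have := x.property.2 (firstIdx t hex x - 1)
    rwa [h1] at this
  · have heq : (Vmap hω s t step' ht hstep' hex'
        (Vmap hω t s step hs hstep hex x)).val
          (firstIdx s hex' (Vmap hω t s step hs hstep hex x))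
        = newEdge s step' hex' (Vmap hω t s step hs hstep hex x) :=
      Vmap_val_eq hω s t step' ht hstep' hex' _
    rw [hfi, hnew'] at heq
    rw [h]
    exact heq
  · have h1 : (Vmap hω s t step' ht hstep' hex'
        (Vmap hω t s step hs hstep hex x)).val n
        = (Vmap hω t s step hs hstep hex x).val n :=
      Vmap_val_gt hω s t step' ht hstep' hex' (by rw [hfi]; exact h)
    rw [h1]
    exact Vmap_val_gt hω t s step hs hstep hex h

end Inv

end Stmt18Aux
namespace Stmt18Aux

section Cont

variable {a : ℕ → ℕ → ℕ} {ha : ∀ n i, 2 ≤ a n i} {ω : ℕ → ℕ → GBDEdge → ℕ}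
variable (hω : IsOrder a ha ω) (t s : ℕ → ℕ → ℕ) (step : ℕ → ℕ → ℕ → ℕ)
  (hs : ∀ n i, s n i < a n i + 1)
  (hstep : ∀ n i k, k < a n i + 1 → k ≠ t n i → step n i k < a n i + 1 ∧ step n i k ≠ s n i)
  (hex : ∀ x : (DIO a ha).PathSpace, ∃ m, ω m (x.val m).rng (x.val m) ≠ t m (x.val m).rng)

open Classical in
lemma firstIdx_congr {x y : (DIO a ha).PathSpace}
    (h : ∀ k, k ≤ firstIdx t hex x → y.val k = x.val k) :
    firstIdx t hex y = firstIdx t hex x := by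
  apply le_antisymm
  · apply Nat.find_min' (hex y)
    rw [h _ le_rfl]
    exact firstIdx_spec t hex x
  · by_contra hlt
    push_neg at hlt
    have hspec := firstIdx_spec t hex y
    rw [h _ (le_of_lt hlt)] at hspec
    exact hspec (firstIdx_min t hex hlt)

lemma Vmap_congr {x y : (DIO a ha).PathSpace} {K : ℕ} (hK : firstIdx t hex x ≤ K)
    (h : ∀ k, k ≤ K → y.val k = x.val k) :
    ∀ n, n ≤ K → (Vmap hω t s step hs hstep hex y).val n
      = (Vmap hω t s step hs hstep hex x).val n := by
  have hfi : firstIdx t hex y = firstIdx t hex x :=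
    firstIdx_congr t hex (fun k hk => h k (le_trans hk hK))
  have hne : newEdge t step hex y = newEdge t step hex x := by
    rw [newEdge, newEdge, hfi, h _ hK]
  intro n hn
  rcases lt_trichotomy n (firstIdx t hex x) with hc | hc | hc
  · rw [Vmap_val_lt hω t s step hs hstep hex (by rw [hfi]; exact hc),
      Vmap_val_lt hω t s step hs hstep hex hc, hfi, hne]
  · rw [hc, ← hfi, Vmap_val_eq, hfi, Vmap_val_eq, hne]
  · rw [Vmap_val_gt hω t s step hs hstep hex (by rw [hfi]; exact hc),
      Vmap_val_gt hω t s step hs hstep hex hc]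
    exact h n hn

lemma Vmap_continuous : Continuous (Vmap hω t s step hs hstep hex) := by
  apply Continuous.subtype_mk
  apply continuous_pi
  intro n
  apply IsLocallyConstant.continuous
  rw [IsLocallyConstant.iff_exists_open]
  intro x
  refine ⟨{y : (DIO a ha).PathSpace |
    ∀ k ∈ Finset.range (max n (firstIdx t hex x) + 1), y.val k = x.val k}, ?_, ?_, ?_⟩
  · have : {y : (DIO a ha).PathSpace |
        ∀ k ∈ Finset.range (max n (firstIdx t hex x) + 1), y.val k = x.val k}
        = ⋂ k ∈ Finset.range (max n (firstIdx t hex x) + 1),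
            {y : (DIO a ha).PathSpace | y.val k = x.val k} := by
      ext y; simp
    rw [this]
    apply isOpen_biInter_finset
    intro k _
    have hcont : Continuous (fun y : (DIO a ha).PathSpace => y.val k) :=
      (continuous_apply k).comp continuous_subtype_val
    exact hcont.isOpen_preimage {x.val k} (isOpen_discrete _)
  · intro k _; rfl
  · intro y hy
    apply Vmap_congr hω t s step hs hstep hex (K := max n (firstIdx t hex x))
      (le_max_right _ _) (fun k hk => hy k (Finset.mem_range.mpr (by omega))) n (le_max_left _ _)

end Cont

end Stmt18Aux
/-- For an ordered DIO diagram with no finite-right and no finite-left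
odometers (`I_fr = I_fl = ∅`), there are no maximal and no minimal infinite paths and the
Vershik map `φ_ω` is a homeomorphism of the path space onto itself. -/
theorem stmt18 (a : ℕ → ℕ → ℕ) (ha : ∀ n i, 2 ≤ a n i)
    (ω : ℕ → ℕ → GBDEdge → ℕ) (hω : IsOrder a ha ω)
    (hfr : ∀ i, ¬ FiniteRight a ω i) (hfl : ∀ i, ¬ FiniteLeft ω i) :
    MaxPaths a ha ω = ∅ ∧ MinPaths a ha ω = ∅ ∧
    ∃ Φ : (DIO a ha).PathSpace ≃ₜ (DIO a ha).PathSpace,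
      ∀ x, VershikRel a ha ω x (Φ x) := by
  classical
  have hslr : ∀ i N, ∃ n, N ≤ n ∧ ω n i (i+1, i, 0) = a n i := by
    intro i N
    have h := hfr i
    rw [FiniteRight] at h
    push_neg at h
    obtain ⟨n, hn, h2⟩ := h N
    exact ⟨n, hn, h2⟩
  have hsll : ∀ i N, ∃ n, N ≤ n ∧ ω n i (i+1, i, 0) = 0 := by
    intro i N
    have h := hfl i
    rw [FiniteLeft] at h
    push_neg at h
    obtain ⟨n, hn, h2⟩ := h N
    exact ⟨n, hn, h2⟩
  have hex_max : ∀ x : (DIO a ha).PathSpace,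
      ∃ m, ω m (x.val m).rng (x.val m) ≠ a m (x.val m).rng :=
    Stmt18Aux.exists_ne_rank a ha ω hω a hslr
  have hex_min : ∀ x : (DIO a ha).PathSpace,
      ∃ m, ω m (x.val m).rng (x.val m) ≠ (fun _ _ => 0 : ℕ → ℕ → ℕ) m (x.val m).rng :=
    Stmt18Aux.exists_ne_rank a ha ω hω (fun _ _ => 0) hsll
  have ht_a : ∀ n i, a n i < a n i + 1 := fun n i => Nat.lt_succ_self _
  have hs0 : ∀ n i, (fun _ _ => 0 : ℕ → ℕ → ℕ) n i < a n i + 1 := fun n i => Nat.succ_pos _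
  have hstepF : ∀ n i k, k < a n i + 1 → k ≠ a n i →
      (fun _ _ k => k+1 : ℕ → ℕ → ℕ → ℕ) n i k < a n i + 1 ∧
      (fun _ _ k => k+1 : ℕ → ℕ → ℕ → ℕ) n i k ≠ (fun _ _ => 0 : ℕ → ℕ → ℕ) n i := by
    intro n i k h1 h2
    simp only
    omega
  have hstepB : ∀ n i k, k < a n i + 1 → k ≠ (fun _ _ => 0 : ℕ → ℕ → ℕ) n i →
      (fun _ _ k => k-1 : ℕ → ℕ → ℕ → ℕ) n i k < a n i + 1 ∧
      (fun _ _ k => k-1 : ℕ → ℕ → ℕ → ℕ) n i k ≠ a n i := by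
    intro n i k h1 h2
    have := ha n i
    simp only at h2 ⊢
    omega
  have hinvF : ∀ n i k, k < a n i + 1 → k ≠ a n i →
      (fun _ _ k => k-1 : ℕ → ℕ → ℕ → ℕ) n i ((fun _ _ k => k+1 : ℕ → ℕ → ℕ → ℕ) n i k) = k :=
    by intro n i k _ _; simp
  have hinvB : ∀ n i k, k < a n i + 1 → k ≠ (fun _ _ => 0 : ℕ → ℕ → ℕ) n i →
      (fun _ _ k => k+1 : ℕ → ℕ → ℕ → ℕ) n i ((fun _ _ k => k-1 : ℕ → ℕ → ℕ → ℕ) n i k) = k := by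
    intro n i k _ h
    simp only at h ⊢
    omega
  refine ⟨?_, ?_, ?_⟩
  · rw [Set.eq_empty_iff_forall_notMem]
    intro x hx
    obtain ⟨m, hm⟩ := hex_max x
    exact hm (hx m)
  · rw [Set.eq_empty_iff_forall_notMem]
    intro x hx
    obtain ⟨m, hm⟩ := hex_min x
    exact hm (hx m)
  · refine ⟨⟨⟨Stmt18Aux.Vmap hω a (fun _ _ => 0) (fun _ _ k => k+1) hs0 hstepF hex_max,
      Stmt18Aux.Vmap hω (fun _ _ => 0) a (fun _ _ k => k-1) ht_a hstepB hex_min,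
      fun x => Stmt18Aux.Vmap_Vmap hω a (fun _ _ => 0) (fun _ _ k => k+1) hs0 hstepF hex_max
        ht_a (fun _ _ k => k-1) hstepB hinvF hex_min x,
      fun x => Stmt18Aux.Vmap_Vmap hω (fun _ _ => 0) a (fun _ _ k => k-1) ht_a hstepB hex_min
        hs0 (fun _ _ k => k+1) hstepF hinvB hex_max x⟩,
      Stmt18Aux.Vmap_continuous hω a (fun _ _ => 0) (fun _ _ k => k+1) hs0 hstepF hex_max,
      Stmt18Aux.Vmap_continuous hω (fun _ _ => 0) a (fun _ _ k => k-1) ht_a hstepB hex_min⟩,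
      ?_⟩
    intro x
    show VershikRel a ha ω x
      (Stmt18Aux.Vmap hω a (fun _ _ => 0) (fun _ _ k => k+1) hs0 hstepF hex_max x)
    have hnew := Stmt18Aux.newEdge_spec hω a (fun _ _ => 0) (fun _ _ k => k+1) hstepF hex_max x
    have hval := Stmt18Aux.Vmap_val_eq hω a (fun _ _ => 0) (fun _ _ k => k+1) hs0 hstepF hex_max x
    refine ⟨Stmt18Aux.firstIdx a hex_max x,
      fun n hn => Stmt18Aux.firstIdx_min a hex_max hn,
      Stmt18Aux.firstIdx_spec a hex_max x, ?_, ?_, ?_, ?_⟩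
    · show (_ : GBDEdge).rng = _
      rw [hval]
      exact hnew.1.2
    · show ω _ _ (_ : GBDEdge) = _
      rw [hval]
      exact hnew.2
    · intro n hn
      show ω n _ _ = 0
      rw [Stmt18Aux.Vmap_val_lt hω a (fun _ _ => 0) (fun _ _ k => k+1) hs0 hstepF hex_max hn]
      exact Stmt18Aux.chainEdge_rank a ha ω hω hs0 _ _ _
    · intro n hn
      exact Stmt18Aux.Vmap_val_gt hω a (fun _ _ => 0) (fun _ _ k => k+1) hs0 hstepF hex_max hn
end

section
/- Let B be a diagram of infinite odometers equipped with a quasi-stationary order ω. Then the Vershik map φ_ω cannot be extended to a homeomorphism of the whole path space X_B; that is, there is no homeomorphism Φ : X_B → X_B that agrees with φ_ω on X_B ∖ X_max. -/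
open MeasureTheory
open scoped ENNReal

/-! ### Auxiliary machinery for the proof of Statement 19 -/

/-- The unique edge of rank `r` with range `i` at level `n` (when `r ≤ a n i`). -/
noncomputable def edgeR (a : ℕ → ℕ → ℕ) (ha : ∀ n i, 2 ≤ a n i) (ω : ℕ → ℕ → GBDEdge → ℕ)
    (n i r : ℕ) : GBDEdge :=
  Classical.epsilon fun e => ((DIO a ha).IsEdge n e ∧ e.rng = i) ∧ ω n i e = r

lemma edgeR_spec {a : ℕ → ℕ → ℕ} {ha : ∀ n i, 2 ≤ a n i} {ω : ℕ → ℕ → GBDEdge → ℕ}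
    (hω : IsOrder a ha ω) {n i r : ℕ} (hr : r < a n i + 1) :
    ((DIO a ha).IsEdge n (edgeR a ha ω n i r) ∧ (edgeR a ha ω n i r).rng = i) ∧
      ω n i (edgeR a ha ω n i r) = r := by
  apply Classical.epsilon_spec (p := fun e => ((DIO a ha).IsEdge n e ∧ e.rng = i) ∧ ω n i e = r)
  obtain ⟨e, he, hre⟩ := (hω n i).2.2 (Set.mem_Iio.mpr hr)
  exact ⟨e, he, hre⟩

lemma rank_lt {a : ℕ → ℕ → ℕ} {ha : ∀ n i, 2 ≤ a n i} {ω : ℕ → ℕ → GBDEdge → ℕ}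
    (hω : IsOrder a ha ω) {n i : ℕ} {e : GBDEdge} (he : (DIO a ha).IsEdge n e)
    (hr : e.rng = i) : ω n i e < a n i + 1 :=
  Set.mem_Iio.mp ((hω n i).1 ⟨he, hr⟩)

lemma rank_inj {a : ℕ → ℕ → ℕ} {ha : ∀ n i, 2 ≤ a n i} {ω : ℕ → ℕ → GBDEdge → ℕ}
    (hω : IsOrder a ha ω) {n i : ℕ} {e e' : GBDEdge}
    (he : (DIO a ha).IsEdge n e) (hre : e.rng = i)
    (he' : (DIO a ha).IsEdge n e') (hre' : e'.rng = i)
    (h : ω n i e = ω n i e') : e = e' :=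
  (hω n i).2.1 ⟨he, hre⟩ ⟨he', hre'⟩ h

/-- Classification of the edges with range `i`: vertical or the single horizontal edge. -/
lemma edge_cases {a : ℕ → ℕ → ℕ} {ha : ∀ n i, 2 ≤ a n i} {n i : ℕ} {e : GBDEdge}
    (he : (DIO a ha).IsEdge n e) (hre : e.rng = i) :
    (e.src = i ∧ e.idx < a n i) ∨ e = (i + 1, i, 0) := by
  have he' : e.idx < if e.src = i then a n i else if e.src = i + 1 then 1 else 0 := by
    have : (DIO a ha).f n e.rng e.src
        = if e.src = e.rng then a n e.rng else if e.src = e.rng + 1 then 1 else 0 := rfl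
    have h2 := he
    unfold GBD.IsEdge at h2
    rw [this, hre] at h2
    exact h2
  by_cases h1 : e.src = i
  · rw [if_pos h1] at he'
    exact Or.inl ⟨h1, he'⟩
  · by_cases h2 : e.src = i + 1
    · rw [if_neg h1, if_pos h2] at he'
      have h3 : e.idx = 0 := by omega
      refine Or.inr ?_
      calc e = (e.src, e.rng, e.idx) := rfl
        _ = (i + 1, i, 0) := by rw [h2, hre, h3]
    · rw [if_neg h1, if_neg h2] at he'
      omega

lemma horiz_isEdge (a : ℕ → ℕ → ℕ) (ha : ∀ n i, 2 ≤ a n i) (n i : ℕ) :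
    (DIO a ha).IsEdge n ((i + 1, i, 0) : GBDEdge) := by
  unfold GBD.IsEdge DIO
  simp [GBDEdge.idx, GBDEdge.rng, GBDEdge.src]

lemma horiz_rank_lt {a : ℕ → ℕ → ℕ} {ha : ∀ n i, 2 ≤ a n i} {ω : ℕ → ℕ → GBDEdge → ℕ}
    (hω : IsOrder a ha ω) (n i : ℕ) : ω n i ((i + 1, i, 0) : GBDEdge) < a n i + 1 :=
  rank_lt hω (horiz_isEdge a ha n i) rfl

/-- Not both left and right at the same vertex/level. -/
lemma not_left_right {a : ℕ → ℕ → ℕ} (ha : ∀ n i, 2 ≤ a n i) {ω : ℕ → ℕ → GBDEdge → ℕ}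
    {n i : ℕ} (hl : LeftAt ω n i) (hr : RightAt a ω n i) : False := by
  unfold LeftAt at hl; unfold RightAt at hr
  have := ha n i; omega

/-- The maximal edge is vertical if the order at `i` is not right. -/
lemma maxE_src {a : ℕ → ℕ → ℕ} {ha : ∀ n i, 2 ≤ a n i} {ω : ℕ → ℕ → GBDEdge → ℕ}
    (hω : IsOrder a ha ω) {n i : ℕ} (hi : ¬ RightAt a ω n i) :
    (edgeR a ha ω n i (a n i)).src = i := by
  have hs := edgeR_spec hω (n := n) (i := i) (r := a n i) (by omega)
  rcases edge_cases hs.1.1 hs.1.2 with h | h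
  · exact h.1
  · refine absurd ?_ hi
    unfold RightAt
    rw [← h]
    exact hs.2

/-- The minimal edge is vertical if the order at `i` is not left. -/
lemma minE_src {a : ℕ → ℕ → ℕ} {ha : ∀ n i, 2 ≤ a n i} {ω : ℕ → ℕ → GBDEdge → ℕ}
    (hω : IsOrder a ha ω) {n i : ℕ} (hi : ¬ LeftAt ω n i) :
    (edgeR a ha ω n i 0).src = i := by
  have hs := edgeR_spec hω (n := n) (i := i) (r := 0) (by omega)
  rcases edge_cases hs.1.1 hs.1.2 with h | h
  · exact h.1
  · refine absurd ?_ hi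
    unfold LeftAt
    rw [← h]
    exact hs.2

/-- The minimal edge is the horizontal edge if the order at `i` is left. -/
lemma minE_src_left {a : ℕ → ℕ → ℕ} {ha : ∀ n i, 2 ≤ a n i} {ω : ℕ → ℕ → GBDEdge → ℕ}
    (hω : IsOrder a ha ω) {n i : ℕ} (hi : LeftAt ω n i) :
    (edgeR a ha ω n i 0).src = i + 1 := by
  have hs := edgeR_spec hω (n := n) (i := i) (r := 0) (by omega)
  have : edgeR a ha ω n i 0 = ((i + 1, i, 0) : GBDEdge) :=
    rank_inj hω hs.1.1 hs.1.2 (horiz_isEdge a ha n i) rfl (by rw [hs.2, hi])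
  rw [this]; rfl

/-- The constant maximal vertical path through the vertex `i`. -/
noncomputable def pmax {a : ℕ → ℕ → ℕ} {ha : ∀ n i, 2 ≤ a n i} {ω : ℕ → ℕ → GBDEdge → ℕ}
    (hω : IsOrder a ha ω) (i : ℕ) (hi : ∀ n, ¬ RightAt a ω n i) : (DIO a ha).PathSpace :=
  ⟨fun n => edgeR a ha ω n i (a n i),
   ⟨fun n => (edgeR_spec hω (by omega)).1.1,
    fun n => by rw [(edgeR_spec hω (by omega)).1.2, maxE_src hω (hi (n + 1))]⟩⟩

/-- The constant minimal vertical path through the vertex `i`. -/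
noncomputable def pmin {a : ℕ → ℕ → ℕ} {ha : ∀ n i, 2 ≤ a n i} {ω : ℕ → ℕ → GBDEdge → ℕ}
    (hω : IsOrder a ha ω) (i : ℕ) (hi : ∀ n, ¬ LeftAt ω n i) : (DIO a ha).PathSpace :=
  ⟨fun n => edgeR a ha ω n i 0,
   ⟨fun n => (edgeR_spec hω (by omega)).1.1,
    fun n => by rw [(edgeR_spec hω (by omega)).1.2, minE_src hω (hi (n + 1))]⟩⟩

/-! ### The dual (rank-reversed) order -/

/-- The dual order, reversing all ranks. -/
def dual (a : ℕ → ℕ → ℕ) (ω : ℕ → ℕ → GBDEdge → ℕ) : ℕ → ℕ → GBDEdge → ℕ :=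
  fun n i e => a n i - ω n i e

lemma dual_isOrder {a : ℕ → ℕ → ℕ} {ha : ∀ n i, 2 ≤ a n i} {ω : ℕ → ℕ → GBDEdge → ℕ}
    (hω : IsOrder a ha ω) : IsOrder a ha (dual a ω) := by
  intro n i
  refine ⟨fun e he => ?_, fun e he e' he' h => ?_, fun r hr => ?_⟩
  · have := Set.mem_Iio.mp ((hω n i).1 he)
    simp only [dual, Set.mem_Iio]; omega
  · have b1 := Set.mem_Iio.mp ((hω n i).1 he)
    have b2 := Set.mem_Iio.mp ((hω n i).1 he')
    simp only [dual] at h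
    exact (hω n i).2.1 he he' (by omega)
  · have hr' : a n i - r ∈ Set.Iio (a n i + 1) := by simp only [Set.mem_Iio] at hr ⊢; omega
    obtain ⟨e, he, hre⟩ := (hω n i).2.2 hr'
    refine ⟨e, he, ?_⟩
    simp only [dual, hre, Set.mem_Iio] at hr ⊢
    omega

lemma dual_leftAt {a : ℕ → ℕ → ℕ} {ha : ∀ n i, 2 ≤ a n i} {ω : ℕ → ℕ → GBDEdge → ℕ}
    (hω : IsOrder a ha ω) {n i : ℕ} : LeftAt (dual a ω) n i ↔ RightAt a ω n i := by
  have := horiz_rank_lt hω n i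
  unfold LeftAt RightAt dual
  omega

lemma dual_rightAt {a : ℕ → ℕ → ℕ} {ha : ∀ n i, 2 ≤ a n i} {ω : ℕ → ℕ → GBDEdge → ℕ}
    (hω : IsOrder a ha ω) {n i : ℕ} : RightAt a (dual a ω) n i ↔ LeftAt ω n i := by
  have := horiz_rank_lt hω n i
  have h2 := ha n i
  unfold LeftAt RightAt dual
  omega

lemma dual_qs {a : ℕ → ℕ → ℕ} {ha : ∀ n i, 2 ≤ a n i} {ω : ℕ → ℕ → GBDEdge → ℕ}
    (hω : IsOrder a ha ω) (hqs : QuasiStationary a ω) : QuasiStationary a (dual a ω) := by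
  intro i
  rcases hqs i with h | h | h
  · exact Or.inr (Or.inl fun n => (dual_rightAt hω).mpr (h n))
  · exact Or.inl fun n => (dual_leftAt hω).mpr (h n)
  · exact Or.inr (Or.inr fun n =>
      ⟨fun hl => (h n).2 ((dual_leftAt hω).mp hl), fun hr => (h n).1 ((dual_rightAt hω).mp hr)⟩)

lemma dual_pmax {a : ℕ → ℕ → ℕ} {ha : ∀ n i, 2 ≤ a n i} {ω : ℕ → ℕ → GBDEdge → ℕ}
    (hω : IsOrder a ha ω) {i : ℕ} (hi : ∀ n, ¬ RightAt a (dual a ω) n i)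
    (hi' : ∀ n, ¬ LeftAt ω n i) :
    pmax (dual_isOrder hω) i hi = pmin hω i hi' := by
  apply Subtype.ext; funext n
  show edgeR a ha (dual a ω) n i (a n i) = edgeR a ha ω n i 0
  have h1 := edgeR_spec (dual_isOrder hω) (n := n) (i := i) (r := a n i) (by omega)
  have h2 := edgeR_spec hω (n := n) (i := i) (r := 0) (by omega)
  refine rank_inj (dual_isOrder hω) h1.1.1 h1.1.2 h2.1.1 h2.1.2 ?_
  rw [h1.2]
  show a n i = a n i - ω n i (edgeR a ha ω n i 0)
  rw [h2.2]
  omega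

lemma dual_pmin {a : ℕ → ℕ → ℕ} {ha : ∀ n i, 2 ≤ a n i} {ω : ℕ → ℕ → GBDEdge → ℕ}
    (hω : IsOrder a ha ω) {i : ℕ} (hi : ∀ n, ¬ LeftAt (dual a ω) n i)
    (hi' : ∀ n, ¬ RightAt a ω n i) :
    pmin (dual_isOrder hω) i hi = pmax hω i hi' := by
  apply Subtype.ext; funext n
  show edgeR a ha (dual a ω) n i 0 = edgeR a ha ω n i (a n i)
  have h1 := edgeR_spec (dual_isOrder hω) (n := n) (i := i) (r := 0) (by omega)
  have h2 := edgeR_spec hω (n := n) (i := i) (r := a n i) (by omega)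
  refine rank_inj (dual_isOrder hω) h1.1.1 h1.1.2 h2.1.1 h2.1.2 ?_
  rw [h1.2]
  show (0 : ℕ) = a n i - ω n i (edgeR a ha ω n i (a n i))
  rw [h2.2, Nat.sub_self]

/-! ### Successor existence, uniqueness, and duality for the Vershik relation -/

lemma vershik_congr {a : ℕ → ℕ → ℕ} {ha : ∀ n i, 2 ≤ a n i}
    {ω₁ ω₂ : ℕ → ℕ → GBDEdge → ℕ}
    (h : ∀ n (e : GBDEdge), (DIO a ha).IsEdge n e → ω₁ n e.rng e = ω₂ n e.rng e)
    {x y : (DIO a ha).PathSpace} (hxy : VershikRel a ha ω₁ x y) :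
    VershikRel a ha ω₂ x y := by
  obtain ⟨m, h1, h2, h3, h4, h5, h6⟩ := hxy
  refine ⟨m, fun n hn => ?_, fun hc => ?_, h3, ?_, fun n hn => ?_, h6⟩
  · unfold IsMaxEdge at *
    rw [← h n _ (x.prop.1 n)]
    exact h1 n hn
  · unfold IsMaxEdge at *
    rw [← h m _ (x.prop.1 m)] at hc
    exact h2 hc
  · rw [← h3] at h4 ⊢
    rw [← h m _ (y.prop.1 m)]
    rw [h3] at h4 ⊢
    rw [← h m _ (x.prop.1 m)]
    exact h4
  · unfold IsMinEdge at *
    rw [← h n _ (y.prop.1 n)]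
    exact h5 n hn

lemma vershik_rev {a : ℕ → ℕ → ℕ} {ha : ∀ n i, 2 ≤ a n i} {ω : ℕ → ℕ → GBDEdge → ℕ}
    (hω : IsOrder a ha ω) {x y : (DIO a ha).PathSpace}
    (hxy : VershikRel a ha ω x y) : VershikRel a ha (dual a ω) y x := by
  obtain ⟨m, h1, h2, h3, h4, h5, h6⟩ := hxy
  have hxr : ω m (x.val m).rng (x.val m) < a m (x.val m).rng + 1 :=
    rank_lt hω (x.prop.1 m) rfl
  have hxm : ω m (x.val m).rng (x.val m) ≠ a m (x.val m).rng := h2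
  have hA := ha m (x.val m).rng
  refine ⟨m, fun n hn => ?_, fun hc => ?_, h3.symm, ?_, fun n hn => ?_,
    fun n hn => (h6 n hn).symm⟩
  · have := h5 n hn
    unfold IsMinEdge at this
    unfold IsMaxEdge dual
    omega
  · unfold IsMaxEdge dual at hc
    rw [h3] at hc
    omega
  · show dual a ω m (y.val m).rng (x.val m) = dual a ω m (y.val m).rng (y.val m) + 1
    rw [h3]
    unfold dual
    omega
  · have := h1 n hn
    unfold IsMaxEdge at this
    unfold IsMinEdge dual
    omega

/-- Vertices of the minimal (rank `0`) finite path descending from the vertex `v`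
at level `m`: `dvtx a ha ω m v t` is the vertex at level `m - t`. -/
noncomputable def dvtx (a : ℕ → ℕ → ℕ) (ha : ∀ n i, 2 ≤ a n i) (ω : ℕ → ℕ → GBDEdge → ℕ)
    (m v : ℕ) : ℕ → ℕ
  | 0 => v
  | t + 1 => (edgeR a ha ω (m - (t + 1)) (dvtx a ha ω m v t) 0).src

lemma dvtx_succ (a : ℕ → ℕ → ℕ) (ha : ∀ n i, 2 ≤ a n i) (ω : ℕ → ℕ → GBDEdge → ℕ)
    (m v t : ℕ) :
    dvtx a ha ω m v (t + 1) = (edgeR a ha ω (m - (t + 1)) (dvtx a ha ω m v t) 0).src := rfl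

lemma succ_exists {a : ℕ → ℕ → ℕ} {ha : ∀ n i, 2 ≤ a n i} {ω : ℕ → ℕ → GBDEdge → ℕ}
    (hω : IsOrder a ha ω) {x : (DIO a ha).PathSpace} (hx : x ∉ MaxPaths a ha ω) :
    ∃ y, VershikRel a ha ω x y := by
  classical
  have hex : ∃ n, ¬ IsMaxEdge a ω n (x.val n) := by
    by_contra hc
    push_neg at hc
    exact hx fun n => hc n
  set m := Nat.find hex with hm
  have hmax : ∀ n, n < m → IsMaxEdge a ω n (x.val n) := fun n hn =>
    not_not.mp (Nat.find_min hex hn)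
  have hnmax : ¬ IsMaxEdge a ω m (x.val m) := Nat.find_spec hex
  have hρa : ω m (x.val m).rng (x.val m) < a m (x.val m).rng := by
    have h1 := rank_lt hω (x.prop.1 m) rfl
    have h2 : ω m (x.val m).rng (x.val m) ≠ a m (x.val m).rng := hnmax
    omega
  set i := (x.val m).rng with hi
  set ρ := ω m i (x.val m) with hρ
  set em := edgeR a ha ω m i (ρ + 1) with hem
  have hems := edgeR_spec hω (n := m) (i := i) (r := ρ + 1) (by omega)
  rw [← hem] at hems
  refine ⟨⟨fun n => if n < m then edgeR a ha ω n (dvtx a ha ω m em.src (m - n - 1)) 0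
      else if n = m then em else x.val n, ?_, ?_⟩, ?_⟩
  · intro n
    show (DIO a ha).IsEdge n (if n < m then edgeR a ha ω n (dvtx a ha ω m em.src (m - n - 1)) 0
      else if n = m then em else x.val n)
    by_cases h1 : n < m
    · rw [if_pos h1]
      exact (edgeR_spec hω (by omega)).1.1
    · by_cases h2 : n = m
      · rw [if_neg h1, if_pos h2]
        subst h2
        exact hems.1.1
      · rw [if_neg h1, if_neg h2]
        exact x.prop.1 n
  · intro n
    show (if n < m then edgeR a ha ω n (dvtx a ha ω m em.src (m - n - 1)) 0
      else if n = m then em else x.val n).rng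
      = (if n + 1 < m then edgeR a ha ω (n + 1) (dvtx a ha ω m em.src (m - (n + 1) - 1)) 0
      else if n + 1 = m then em else x.val (n + 1)).src
    by_cases h1 : n + 1 < m
    · rw [if_pos (by omega : n < m), if_pos h1]
      rw [(edgeR_spec hω (by omega)).1.2]
      rw [show m - n - 1 = (m - (n + 1) - 1) + 1 by omega]
      rw [dvtx_succ]
      rw [show m - (m - (n + 1) - 1 + 1) = n + 1 by omega]
    · by_cases h2 : n + 1 = m
      · rw [if_pos (by omega : n < m), if_neg (by omega : ¬ n + 1 < m), if_pos h2]
        rw [(edgeR_spec hω (by omega)).1.2]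
        rw [show m - n - 1 = 0 by omega]
        rfl
      · by_cases h3 : n = m
        · rw [if_neg (by omega : ¬ n < m), if_pos h3, if_neg h1, if_neg h2]
          subst h3
          rw [hems.1.2, hi]
          exact x.prop.2 m
        · rw [if_neg (by omega : ¬ n < m), if_neg h3, if_neg h1, if_neg h2]
          exact x.prop.2 n
  · refine ⟨m, hmax, hnmax, ?_, ?_, fun n hn => ?_, fun n hn => ?_⟩
    · show (if m < m then _ else if m = m then em else _).rng = i
      rw [if_neg (lt_irrefl m), if_pos rfl]
      exact hems.1.2
    · show ω m i (if m < m then _ else if m = m then em else _) = ρ + 1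
      rw [if_neg (lt_irrefl m), if_pos rfl]
      exact hems.2
    · show IsMinEdge ω n (if n < m then edgeR a ha ω n (dvtx a ha ω m em.src (m - n - 1)) 0
        else if n = m then em else x.val n)
      rw [if_pos hn]
      unfold IsMinEdge
      rw [(edgeR_spec hω (by omega)).1.2]
      exact (edgeR_spec hω (by omega)).2
    · show (if n < m then _ else if n = m then em else x.val n) = x.val n
      rw [if_neg (by omega : ¬ n < m), if_neg (by omega : ¬ n = m)]

lemma succ_unique {a : ℕ → ℕ → ℕ} {ha : ∀ n i, 2 ≤ a n i} {ω : ℕ → ℕ → GBDEdge → ℕ}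
    (hω : IsOrder a ha ω) {x y y' : (DIO a ha).PathSpace}
    (h : VershikRel a ha ω x y) (h' : VershikRel a ha ω x y') : y = y' := by
  obtain ⟨m, h1, h2, h3, h4, h5, h6⟩ := h
  obtain ⟨m', h1', h2', h3', h4', h5', h6'⟩ := h'
  have hmm : m = m' := by
    by_contra hc
    rcases Nat.lt_or_ge m m' with hlt | hge
    · exact h2 (h1' m hlt)
    · exact h2' (h1 m' (by omega))
  subst hmm
  have hym : y.val m = y'.val m := by
    refine rank_inj (i := (x.val m).rng) hω (y.prop.1 m) h3 (y'.prop.1 m) h3' ?_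
    rw [h4, h4']
  have hdown : ∀ t, t ≤ m → y.val (m - t) = y'.val (m - t) := by
    intro t
    induction t with
    | zero => intro _; simpa using hym
    | succ t ih =>
      intro ht
      have hih := ih (by omega)
      have hk : m - (t + 1) + 1 = m - t := by omega
      have hr : (y.val (m - (t + 1))).rng = (y'.val (m - (t + 1))).rng := by
        rw [y.prop.2 (m - (t + 1)), y'.prop.2 (m - (t + 1)), hk, hih]
      refine rank_inj (i := (y.val (m - (t + 1))).rng) hω
        (y.prop.1 _) rfl (y'.prop.1 _) hr.symm ?_
      have m1 : IsMinEdge ω (m - (t + 1)) (y.val (m - (t + 1))) := h5 _ (by omega)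
      have m2 : IsMinEdge ω (m - (t + 1)) (y'.val (m - (t + 1))) := h5' _ (by omega)
      unfold IsMinEdge at m1 m2
      rw [m1, hr]
      exact m2.symm
  apply Subtype.ext; funext n
  rcases Nat.lt_trichotomy n m with hn | hn | hn
  · have := hdown (m - n) (by omega)
    rwa [show m - (m - n) = n by omega] at this
  · subst hn; exact hym
  · rw [h6 n hn, h6' n hn]

/-- The inverse homeomorphism realizes the Vershik relation for the dual order. -/
lemma inv_rel {a : ℕ → ℕ → ℕ} {ha : ∀ n i, 2 ≤ a n i} {ω : ℕ → ℕ → GBDEdge → ℕ}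
    (hω : IsOrder a ha ω) (Φ : (DIO a ha).PathSpace ≃ₜ (DIO a ha).PathSpace)
    (hΦ : ∀ x, x ∉ MaxPaths a ha ω → VershikRel a ha ω x (Φ x)) :
    ∀ y, y ∉ MaxPaths a ha (dual a ω) → VershikRel a ha (dual a ω) y (Φ.symm y) := by
  intro y hy
  obtain ⟨x', hx'⟩ := succ_exists (dual_isOrder hω) hy
  -- hx' : VershikRel (dual) y x'
  have hx'y : VershikRel a ha ω x' y := by
    refine vershik_congr (ω₁ := dual a (dual a ω)) ?_ (vershik_rev (dual_isOrder hω) hx')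
    intro n e he
    have hb := Set.mem_Iio.mp ((hω n e.rng).1 ⟨he, rfl⟩)
    unfold dual
    omega
  have hx'nm : x' ∉ MaxPaths a ha ω := by
    obtain ⟨m, _, h2, _⟩ := hx'y
    exact fun hc => h2 (hc m)
  have : Φ x' = y := succ_unique hω (hΦ x' hx'nm) hx'y
  have hx'e : x' = Φ.symm y := by rw [← this, Homeomorph.symm_apply_apply]
  rw [← hx'e]
  exact vershik_rev hω hx'y

/-! ### The climbing sequence and the limit lemma -/

lemma pmax_val {a : ℕ → ℕ → ℕ} {ha : ∀ n i, 2 ≤ a n i} {ω : ℕ → ℕ → GBDEdge → ℕ}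
    (hω : IsOrder a ha ω) (i : ℕ) (hi : ∀ n, ¬ RightAt a ω n i) (n : ℕ) :
    (pmax hω i hi).val n = edgeR a ha ω n i (a n i) := rfl

lemma pmin_val {a : ℕ → ℕ → ℕ} {ha : ∀ n i, 2 ≤ a n i} {ω : ℕ → ℕ → GBDEdge → ℕ}
    (hω : IsOrder a ha ω) (i : ℕ) (hi : ∀ n, ¬ LeftAt ω n i) (n : ℕ) :
    (pmin hω i hi).val n = edgeR a ha ω n i 0 := rfl

lemma left_transfer {a : ℕ → ℕ → ℕ} (ha : ∀ n i, 2 ≤ a n i) {ω : ℕ → ℕ → GBDEdge → ℕ}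
    (hqs : QuasiStationary a ω) (n v : ℕ) : LeftAt ω n v ↔ LeftAt ω 0 v := by
  rcases hqs v with h | h | h
  · exact ⟨fun _ => h 0, fun _ => h n⟩
  · exact ⟨fun hc => absurd (not_left_right ha hc (h n)) not_false,
      fun hc => absurd (not_left_right ha hc (h 0)) not_false⟩
  · exact ⟨fun hc => absurd hc (h n).1, fun hc => absurd hc (h 0).1⟩

open Classical in
/-- The climbing vertex sequence starting at `s`. -/
noncomputable def climb (ω : ℕ → ℕ → GBDEdge → ℕ) (s : ℕ) : ℕ → ℕ
  | 0 => s
  | t + 1 => if LeftAt ω 0 (climb ω s t) then climb ω s t + 1 else climb ω s t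

open Classical in
lemma climb_succ (ω : ℕ → ℕ → GBDEdge → ℕ) (s t : ℕ) :
    climb ω s (t + 1)
      = if LeftAt ω 0 (climb ω s t) then climb ω s t + 1 else climb ω s t := rfl

lemma climb_mono (ω : ℕ → ℕ → GBDEdge → ℕ) (s : ℕ) (t : ℕ) : s ≤ climb ω s t := by
  induction t with
  | zero => exact le_refl s
  | succ t ih =>
    rw [climb_succ]
    split_ifs <;> omega

lemma climb_stab {ω : ℕ → ℕ → GBDEdge → ℕ} {s T : ℕ} (hT : ¬ LeftAt ω 0 (climb ω s T)) :
    ∀ t, T ≤ t → climb ω s t = climb ω s T := by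
  have key : ∀ r, climb ω s (T + r) = climb ω s T := by
    intro r
    induction r with
    | zero => rfl
    | succ r ih =>
      rw [show T + (r + 1) = (T + r) + 1 by omega, climb_succ, ih, if_neg hT]
  intro t ht
  have := key (t - T)
  rwa [show T + (t - T) = t by omega] at this

lemma climb_all {ω : ℕ → ℕ → GBDEdge → ℕ} {s : ℕ}
    (h : ∀ t, LeftAt ω 0 (climb ω s t)) : ∀ t, climb ω s t = s + t := by
  intro t
  induction t with
  | zero => rfl
  | succ t ih =>
    rw [climb_succ, if_pos (h t), ih]
    omega

/-- The approximating path: the maximal vertical path at `i` with the edge at level `N`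
replaced by the vertical edge of rank `t N`. -/
noncomputable def approx {a : ℕ → ℕ → ℕ} {ha : ∀ n i, 2 ≤ a n i} {ω : ℕ → ℕ → GBDEdge → ℕ}
    (hω : IsOrder a ha ω) (i : ℕ) (hi : ∀ n, ¬ RightAt a ω n i) (t : ℕ → ℕ)
    (ht1 : ∀ n, t n + 1 < a n i + 1) (ht2 : ∀ n, (edgeR a ha ω n i (t n)).src = i)
    (N : ℕ) : (DIO a ha).PathSpace :=
  ⟨fun n => if n = N then edgeR a ha ω n i (t n) else edgeR a ha ω n i (a n i),
   ⟨fun n => by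
      show (DIO a ha).IsEdge n
        (if n = N then edgeR a ha ω n i (t n) else edgeR a ha ω n i (a n i))
      by_cases h : n = N
      · rw [if_pos h]; exact (edgeR_spec hω (by have := ht1 n; omega)).1.1
      · rw [if_neg h]; exact (edgeR_spec hω (by omega)).1.1,
    fun n => by
      show (if n = N then edgeR a ha ω n i (t n) else edgeR a ha ω n i (a n i)).rng
        = (if n + 1 = N then edgeR a ha ω (n + 1) i (t (n + 1))
            else edgeR a ha ω (n + 1) i (a (n + 1) i)).src
      have hr : (if n = N then edgeR a ha ω n i (t n) else edgeR a ha ω n i (a n i)).rng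
          = i := by
        by_cases h : n = N
        · rw [if_pos h]; exact (edgeR_spec hω (by have := ht1 n; omega)).1.2
        · rw [if_neg h]; exact (edgeR_spec hω (by omega)).1.2
      rw [hr]
      by_cases h2 : n + 1 = N
      · rw [if_pos h2]; exact (ht2 (n + 1)).symm
      · rw [if_neg h2]; exact (maxE_src hω (hi (n + 1))).symm⟩⟩

lemma approx_val {a : ℕ → ℕ → ℕ} {ha : ∀ n i, 2 ≤ a n i} {ω : ℕ → ℕ → GBDEdge → ℕ}
    (hω : IsOrder a ha ω) (i : ℕ) (hi : ∀ n, ¬ RightAt a ω n i) (t : ℕ → ℕ)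
    (ht1 : ∀ n, t n + 1 < a n i + 1) (ht2 : ∀ n, (edgeR a ha ω n i (t n)).src = i)
    (N n : ℕ) :
    (approx hω i hi t ht1 ht2 N).val n
      = if n = N then edgeR a ha ω n i (t n) else edgeR a ha ω n i (a n i) := rfl

/-- The main continuity lemma: the image of the maximal vertical path at `i` under any
homeomorphic extension of the Vershik map is the minimal vertical path at the first
non-left vertex strictly reachable by climbing from `s`. -/
lemma limit {a : ℕ → ℕ → ℕ} {ha : ∀ n i, 2 ≤ a n i} {ω : ℕ → ℕ → GBDEdge → ℕ}
    (hω : IsOrder a ha ω) (hqs : QuasiStationary a ω)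
    (Φ : (DIO a ha).PathSpace ≃ₜ (DIO a ha).PathSpace)
    (hΦ : ∀ x, x ∉ MaxPaths a ha ω → VershikRel a ha ω x (Φ x))
    (i s : ℕ) (hi : ∀ n, ¬ RightAt a ω n i) (t : ℕ → ℕ)
    (ht1 : ∀ n, t n + 1 < a n i + 1) (ht2 : ∀ n, (edgeR a ha ω n i (t n)).src = i)
    (ht3 : ∀ n, (edgeR a ha ω n i (t n + 1)).src = s) :
    ∃ j, s ≤ j ∧ ∃ hj : ∀ n, ¬ LeftAt ω n j, Φ (pmax hω i hi) = pmin hω j hj := by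
  classical
  set X := approx hω i hi t ht1 ht2 with hX
  -- convergence of the approximating paths
  have htend : Filter.Tendsto X Filter.atTop (nhds (pmax hω i hi)) := by
    refine tendsto_subtype_rng.mpr ?_
    rw [tendsto_pi_nhds]
    intro k
    refine Filter.Tendsto.congr' ?_ tendsto_const_nhds
    filter_upwards [Filter.eventually_gt_atTop k] with N hN
    rw [hX, approx_val, if_neg (by omega)]
    rfl
  have hcont : ∀ k, ∀ᶠ N in Filter.atTop,
      (Φ (X N)).val k = (Φ (pmax hω i hi)).val k := by
    intro k
    have h1 : Filter.Tendsto (fun N => Φ (X N)) Filter.atTop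
        (nhds (Φ (pmax hω i hi))) := (Φ.continuous.tendsto _).comp htend
    have h2 : Filter.Tendsto (fun N => (Φ (X N)).val k) Filter.atTop
        (nhds ((Φ (pmax hω i hi)).val k)) :=
      (((continuous_apply k).comp continuous_subtype_val).tendsto _).comp h1
    rw [nhds_discrete, Filter.tendsto_pure] at h2
    exact h2
  -- structure of Φ (X N)
  have hnm : ∀ N, X N ∉ MaxPaths a ha ω := by
    intro N hc
    have hmax := hc N
    unfold IsMaxEdge at hmax
    rw [hX, approx_val, if_pos rfl] at hmax
    rw [(edgeR_spec hω (by have := ht1 N; omega)).1.2] at hmax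
    rw [(edgeR_spec hω (by have := ht1 N; omega)).2] at hmax
    have := ht1 N
    omega
  have hfacts : ∀ N, (Φ (X N)).val N = edgeR a ha ω N i (t N + 1) ∧
      (∀ n, n < N → IsMinEdge ω n ((Φ (X N)).val n)) := by
    intro N
    obtain ⟨m, h1, h2, h3, h4, h5, h6⟩ := hΦ (X N) (hnm N)
    have hmN : m = N := by
      by_contra hc
      apply h2
      unfold IsMaxEdge
      rw [hX, approx_val, if_neg hc]
      rw [(edgeR_spec hω (by omega)).1.2, (edgeR_spec hω (by omega)).2]
    have hmN' : N = m := hmN.symm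
    subst hmN'
    have hXm : (X N).val N = edgeR a ha ω N i (t N) := by
      rw [hX, approx_val, if_pos rfl]
    have hXr : ((X N).val N).rng = i := by
      rw [hXm]; exact (edgeR_spec hω (by have := ht1 N; omega)).1.2
    constructor
    · refine rank_inj (i := i) hω ((Φ (X N)).prop.1 N) (by rw [h3, hXr])
        (edgeR_spec hω (ht1 N)).1.1 (edgeR_spec hω (ht1 N)).1.2 ?_
      rw [(edgeR_spec hω (ht1 N)).2]
      have h4' := h4
      rw [hXr] at h4'
      rw [h4', hXm, (edgeR_spec hω (by have := ht1 N; omega)).2]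
    · exact h5
  -- the downward minimal path of Φ (X N)
  have hdown : ∀ N d, d + 1 ≤ N →
      (Φ (X N)).val (N - (d + 1)) = edgeR a ha ω (N - (d + 1)) (climb ω s d) 0 := by
    intro N d
    induction d with
    | zero =>
      intro hN
      show (Φ (X N)).val (N - 1) = edgeR a ha ω (N - 1) s 0
      have hmin := (hfacts N).2 (N - 1) (by omega)
      unfold IsMinEdge at hmin
      have hrng : ((Φ (X N)).val (N - 1)).rng = s := by
        have := (Φ (X N)).prop.2 (N - 1)
        rw [show N - 1 + 1 = N by omega, (hfacts N).1] at this
        rw [this, ht3 N]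
      refine rank_inj (i := s) hω ((Φ (X N)).prop.1 (N - 1)) hrng
        (edgeR_spec hω (by have := ha (N - 1) s; omega)).1.1
        (edgeR_spec hω (by have := ha (N - 1) s; omega)).1.2 ?_
      rw [(edgeR_spec hω (by have := ha (N - 1) s; omega)).2]
      rw [← hrng]
      exact hmin
    | succ d ih =>
      intro hN
      show (Φ (X N)).val (N - (d + 2)) = edgeR a ha ω (N - (d + 2)) (climb ω s (d + 1)) 0
      have hih := ih (by omega)
      have hk : N - (d + 2) + 1 = N - (d + 1) := by omega
      have hmin := (hfacts N).2 (N - (d + 2)) (by omega)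
      unfold IsMinEdge at hmin
      have hrng : ((Φ (X N)).val (N - (d + 2))).rng = climb ω s (d + 1) := by
        have hp := (Φ (X N)).prop.2 (N - (d + 2))
        rw [hk, hih] at hp
        rw [hp]
        rw [climb_succ]
        by_cases hL : LeftAt ω 0 (climb ω s d)
        · rw [if_pos hL]
          exact minE_src_left hω ((left_transfer ha hqs (N - (d + 1)) _).mpr hL)
        · rw [if_neg hL]
          exact minE_src hω (fun hc => hL ((left_transfer ha hqs (N - (d + 1)) _).mp hc))
      refine rank_inj (i := climb ω s (d + 1)) hω ((Φ (X N)).prop.1 (N - (d + 2))) hrng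
        (edgeR_spec hω (by have := ha (N - (d + 2)) (climb ω s (d + 1)); omega)).1.1
        (edgeR_spec hω (by have := ha (N - (d + 2)) (climb ω s (d + 1)); omega)).1.2 ?_
      rw [(edgeR_spec hω (by have := ha (N - (d + 2)) (climb ω s (d + 1)); omega)).2]
      rw [← hrng]
      exact hmin
  -- case analysis on stabilization of the climb
  by_cases hstab : ∃ T, ¬ LeftAt ω 0 (climb ω s T)
  · obtain ⟨T, hT⟩ := hstab
    refine ⟨climb ω s T, climb_mono ω s T,
      fun n hc => hT ((left_transfer ha hqs n _).mp hc), ?_⟩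
    apply Subtype.ext; funext k
    obtain ⟨N0, hN0⟩ := Filter.eventually_atTop.mp (hcont k)
    have h1 : (Φ (pmax hω i hi)).val k = (Φ (X (N0 + k + T + 2))).val k :=
      (hN0 (N0 + k + T + 2) (by omega)).symm
    have h2 : (Φ (X (N0 + k + T + 2))).val k
        = edgeR a ha ω k (climb ω s (N0 + k + T + 2 - k - 1)) 0 := by
      have := hdown (N0 + k + T + 2) (N0 + k + T + 2 - k - 1) (by omega)
      rwa [show N0 + k + T + 2 - (N0 + k + T + 2 - k - 1 + 1) = k by omega] at this
    show (Φ (pmax hω i hi)).val k = edgeR a ha ω k (climb ω s T) 0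
    rw [h1, h2, climb_stab hT (N0 + k + T + 2 - k - 1) (by omega)]
  · exfalso
    push_neg at hstab
    obtain ⟨N0, hN0⟩ := Filter.eventually_atTop.mp (hcont 0)
    have e1 : (Φ (X (N0 + 1))).val 0 = edgeR a ha ω 0 (climb ω s N0) 0 := by
      have := hdown (N0 + 1) N0 (by omega)
      rwa [show N0 + 1 - (N0 + 1) = 0 by omega] at this
    have e2 : (Φ (X (N0 + 2))).val 0 = edgeR a ha ω 0 (climb ω s (N0 + 1)) 0 := by
      have := hdown (N0 + 2) (N0 + 1) (by omega)
      rwa [show N0 + 2 - (N0 + 1 + 1) = 0 by omega] at this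
    have heq : edgeR a ha ω 0 (climb ω s N0) 0 = edgeR a ha ω 0 (climb ω s (N0 + 1)) 0 := by
      rw [← e1, ← e2, hN0 (N0 + 1) (by omega), hN0 (N0 + 2) (by omega)]
    have hr1 := (edgeR_spec (n := 0) (i := climb ω s N0) (r := 0) hω
      (by have := ha 0 (climb ω s N0); omega)).1.2
    have hr2 := (edgeR_spec (n := 0) (i := climb ω s (N0 + 1)) (r := 0) hω
      (by have := ha 0 (climb ω s (N0 + 1)); omega)).1.2
    rw [heq, hr2] at hr1
    rw [climb_all hstab N0, climb_all hstab (N0 + 1)] at hr1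
    omega

/-! ### The key lemma and the main theorem -/

lemma key {a : ℕ → ℕ → ℕ} {ha : ∀ n i, 2 ≤ a n i} {ω : ℕ → ℕ → GBDEdge → ℕ}
    (hω : IsOrder a ha ω) (hqs : QuasiStationary a ω)
    (Φ : (DIO a ha).PathSpace ≃ₜ (DIO a ha).PathSpace)
    (hΦ : ∀ x, x ∉ MaxPaths a ha ω → VershikRel a ha ω x (Φ x))
    (i : ℕ) (hi : ∀ n, ¬ RightAt a ω n i) :
    ∃ j, i < j ∧ ∃ hj : ∀ n, ¬ LeftAt ω n j, Φ (pmax hω i hi) = pmin hω j hj := by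
  rcases hqs i with hL | hR | hM
  · -- left at `i` on all levels: deviate to the edge just below the maximal one
    have ht1 : ∀ n, (a n i - 1) + 1 < a n i + 1 := fun n => by have := ha n i; omega
    have ht2 : ∀ n, (edgeR a ha ω n i (a n i - 1)).src = i := by
      intro n
      have hs := edgeR_spec hω (n := n) (i := i) (r := a n i - 1) (by have := ha n i; omega)
      rcases edge_cases hs.1.1 hs.1.2 with h | h
      · exact h.1
      · exfalso
        have hh : ω n i ((i + 1, i, 0) : GBDEdge) = a n i - 1 := by rw [← h]; exact hs.2
        have := hL n
        unfold LeftAt at this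
        have := ha n i
        omega
    have ht3 : ∀ n, (edgeR a ha ω n i ((a n i - 1) + 1)).src = i := by
      intro n
      rw [show (a n i - 1) + 1 = a n i by have := ha n i; omega]
      exact maxE_src hω (hi n)
    obtain ⟨j, hsj, hj, heq⟩ := limit hω hqs Φ hΦ i i hi (fun n => a n i - 1) ht1 ht2 ht3
    refine ⟨j, ?_, hj, heq⟩
    rcases Nat.lt_or_ge i j with h | h
    · exact h
    · exfalso
      have : j = i := by omega
      exact hj 0 (this ▸ hL 0)
  · exact absurd (hR 0) (hi 0)
  · -- middle at `i` on all levels: deviate to the edge just below the horizontal one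
    have hb : ∀ n, 1 ≤ ω n i ((i + 1, i, 0) : GBDEdge) ∧
        ω n i ((i + 1, i, 0) : GBDEdge) < a n i := by
      intro n
      have h1 := horiz_rank_lt hω n i
      have h2 : ω n i ((i + 1, i, 0) : GBDEdge) ≠ 0 := (hM n).1
      have h3 : ω n i ((i + 1, i, 0) : GBDEdge) ≠ a n i := (hM n).2
      omega
    have ht1 : ∀ n, (ω n i ((i + 1, i, 0) : GBDEdge) - 1) + 1 < a n i + 1 := fun n => by
      have := hb n; omega
    have ht2 : ∀ n, (edgeR a ha ω n i (ω n i ((i + 1, i, 0) : GBDEdge) - 1)).src = i := by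
      intro n
      have hs := edgeR_spec hω (n := n) (i := i)
        (r := ω n i ((i + 1, i, 0) : GBDEdge) - 1) (by have := hb n; omega)
      rcases edge_cases hs.1.1 hs.1.2 with h | h
      · exact h.1
      · exfalso
        have hh : ω n i ((i + 1, i, 0) : GBDEdge)
            = ω n i ((i + 1, i, 0) : GBDEdge) - 1 := by
          conv_lhs => rw [← h]
          exact hs.2
        have := hb n
        omega
    have ht3 : ∀ n,
        (edgeR a ha ω n i ((ω n i ((i + 1, i, 0) : GBDEdge) - 1) + 1)).src = i + 1 := by
      intro n
      have hval : edgeR a ha ω n i ((ω n i ((i + 1, i, 0) : GBDEdge) - 1) + 1)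
          = ((i + 1, i, 0) : GBDEdge) := by
        have hs := edgeR_spec hω (n := n) (i := i)
          (r := (ω n i ((i + 1, i, 0) : GBDEdge) - 1) + 1) (by have := hb n; omega)
        refine rank_inj hω hs.1.1 hs.1.2 (horiz_isEdge a ha n i) rfl ?_
        rw [hs.2]
        have := hb n
        omega
      rw [hval]
      rfl
    obtain ⟨j, hsj, hj, heq⟩ := limit hω hqs Φ hΦ i (i + 1) hi
      (fun n => ω n i ((i + 1, i, 0) : GBDEdge) - 1) ht1 ht2 ht3
    exact ⟨j, by omega, hj, heq⟩

/-- For a DIO diagram with a quasi-stationary order `ω`, the Vershik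
map `φ_ω` cannot be extended to a homeomorphism of the whole path space: there is no
homeomorphism of `X_B` agreeing with `φ_ω` on `X_B ∖ X_max`. -/
theorem stmt19 (a : ℕ → ℕ → ℕ) (ha : ∀ n i, 2 ≤ a n i)
    (ω : ℕ → ℕ → GBDEdge → ℕ) (hω : IsOrder a ha ω) (hqs : QuasiStationary a ω) :
    ¬ ∃ Φ : (DIO a ha).PathSpace ≃ₜ (DIO a ha).PathSpace,
      ∀ x, x ∉ MaxPaths a ha ω → VershikRel a ha ω x (Φ x) := by
  rintro ⟨Φ, hΦ⟩
  by_cases hR : ∃ i, ∀ n, ¬ RightAt a ω n i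
  · obtain ⟨i, hi⟩ := hR
    obtain ⟨j, hij, hj, h1⟩ := key hω hqs Φ hΦ i hi
    have hj' : ∀ n, ¬ RightAt a (dual a ω) n j :=
      fun n hc => hj n ((dual_rightAt hω).mp hc)
    obtain ⟨k, hjk, hk, h2⟩ := key (dual_isOrder hω) (dual_qs hω hqs) Φ.symm
      (inv_rel hω Φ hΦ) j hj'
    have hk' : ∀ n, ¬ RightAt a ω n k := fun n hc => hk n ((dual_leftAt hω).mpr hc)
    rw [dual_pmax hω hj' hj, dual_pmin hω hk hk'] at h2
    rw [← h1, Homeomorph.symm_apply_apply] at h2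
    have hik : i = k := by
      have hc := congrArg (fun z : (DIO a ha).PathSpace => (z.val 0).rng) h2
      simp only [pmax_val] at hc
      rw [(edgeR_spec hω (n := 0) (i := i) (r := a 0 i) (by omega)).1.2,
        (edgeR_spec hω (n := 0) (i := k) (r := a 0 k) (by omega)).1.2] at hc
      exact hc
    omega
  · push_neg at hR
    have hall : ∀ i n, RightAt a ω n i := by
      intro i n
      rcases hqs i with h | h | h
      · obtain ⟨n0, hn0⟩ := hR i
        exact absurd (not_left_right ha (h n0) hn0) not_false
      · exact h n
      · obtain ⟨n0, hn0⟩ := hR i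
        exact absurd hn0 (h n0).2
    have h0 : ∀ n, ¬ LeftAt ω n 0 := fun n hc => not_left_right ha hc (hall 0 n)
    set x := Φ.symm (pmin hω 0 h0) with hxdef
    have hxm : x ∉ MaxPaths a ha ω := by
      intro hc
      have hhor : ∀ n, (x.val n).src = (x.val n).rng + 1 := by
        intro n
        have hmax : ω n (x.val n).rng (x.val n) = a n (x.val n).rng := hc n
        have : x.val n = (((x.val n).rng + 1, (x.val n).rng, 0) : GBDEdge) := by
          refine rank_inj hω (x.prop.1 n) rfl (horiz_isEdge a ha n (x.val n).rng) rfl ?_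
          rw [hmax, hall (x.val n).rng n]
        rw [this]
        rfl
      have hstep : ∀ n, ((x.val (n + 1)).rng + 1 = (x.val n).rng) := by
        intro n
        rw [← hhor (n + 1)]
        exact (x.prop.2 n).symm
      have hdesc : ∀ n, (x.val n).rng + n ≤ (x.val 0).rng := by
        intro n
        induction n with
        | zero => omega
        | succ n ih =>
          have := hstep n
          omega
      have := hdesc ((x.val 0).rng + 1)
      omega
    obtain ⟨m, _, _, h3, h4, _, _⟩ := hΦ x hxm
    rw [hxdef, Homeomorph.apply_symm_apply] at h3 h4
    rw [← h3] at h4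
    rw [pmin_val] at h4
    rw [(edgeR_spec hω (n := m) (i := 0) (r := 0) (by omega)).1.2] at h4
    rw [(edgeR_spec hω (n := m) (i := 0) (r := 0) (by omega)).2] at h4
    omega
end
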